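/- arXiv:1009.1783 — 4 statements merged into one kernel-verified Lean document; each statement's English description precedes it below -/
import Mathlib

section
/- Let φ be a nonnegative piecewise-linear function with integer slopes on Σ satisfying conditions (1)–(3) with respect to m ∈ ℤ^n. Suppose v is a trivalent vertex (deg(v) = 3) at which Σ is balanced (Σ_{e ∋ v} d_v(e) = 0) and which has an adjacent edge e₁ with m·e₁ ≠ 0. Then v has at most one adjacent edge e with m·e = 0, and for such an edge the slope satisfies s_φ(v,e) = 1. -/
attribute [local instance] Classical.propDecidable

/-- A finite graph `Σ` with bounded edges (each joining two distinct vertices)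
and unbounded edges (leaves, each attached to a single vertex).  Each bounded
edge `e` carries a direction vector `dir e ∈ ℤ^n` at its source (the direction
at the target endpoint is `-dir e`), and each unbounded edge `u` carries a
direction vector `udir u` at its attaching vertex. -/
structure TropGraph (n : ℕ) where
  V : Type
  BE : Type
  UE : Type
  [fintV : Fintype V]
  [fintBE : Fintype BE]
  [fintUE : Fintype UE]
  src : BE → V
  tgt : BE → V
  src_ne_tgt : ∀ e, src e ≠ tgt e
  att : UE → V
  dir : BE → Fin n → ℤ
  udir : UE → Fin n → ℤ

attribute [instance] TropGraph.fintV TropGraph.fintBE TropGraph.fintUE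

/-- `⟨m, d⟩ = Σ i, m i * d i`. -/
def pairDot {n : ℕ} (m d : Fin n → ℤ) : ℤ := ∑ i, m i * d i

namespace TropGraph

variable {n : ℕ}

/-- The degree of a vertex: the number of edge-endpoints at `v`. -/
noncomputable def degree (G : TropGraph n) (v : G.V) : ℕ :=
  (Finset.univ.filter (fun e => G.src e = v)).card +
    (Finset.univ.filter (fun e => G.tgt e = v)).card +
    (Finset.univ.filter (fun u => G.att u = v)).card

/-- A piecewise-linear function on `Σ` with integer slopes: real values at the
vertices, differing by integers along bounded edges (which have length 1, so the
slope of `φ` at `src e` along a bounded edge `e` is `φ(tgt e) - φ(src e)`),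
together with an assigned integer slope on each unbounded edge. -/
structure PL (G : TropGraph n) where
  val : G.V → ℝ
  uslope : G.UE → ℤ
  int_slope : ∀ e : G.BE, ∃ k : ℤ, val (G.tgt e) - val (G.src e) = (k : ℝ)

namespace PL

variable {G : TropGraph n}

/-- `φ` is nonnegative: all vertex values and all slopes on unbounded edges are `≥ 0`. -/
def Nonneg (φ : PL G) : Prop := (∀ v, 0 ≤ φ.val v) ∧ ∀ u, 0 ≤ φ.uslope u

/-- The sum `Σ_{e ∋ v} s_φ(v,e)` of the slopes of `φ` at `v` along all edges at `v`,
so that the Laplacian is `Δ(φ)(v) = -slopeSum φ v`. -/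
noncomputable def slopeSum (φ : PL G) (v : G.V) : ℝ :=
  (∑ e ∈ Finset.univ.filter (fun e => G.src e = v), (φ.val (G.tgt e) - φ.val (G.src e))) +
    (∑ e ∈ Finset.univ.filter (fun e => G.tgt e = v), (φ.val (G.src e) - φ.val (G.tgt e))) +
    ∑ u ∈ Finset.univ.filter (fun u => G.att u = v), (φ.uslope u : ℝ)

/-- Condition (1): `Δ(φ) + K_Σ ≥ 0`, i.e. `Σ_{e ∋ v} s_φ(v,e) ≤ deg v - 2` for all `v`. -/
def CanonicalBound (φ : PL G) : Prop := ∀ v : G.V, φ.slopeSum v ≤ (G.degree v : ℝ) - 2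

/-- Condition (2): `φ` vanishes identically on every edge `e` with `m·e ≠ 0`. -/
def VanishesNonOrth (φ : PL G) (m : Fin n → ℤ) : Prop :=
  (∀ e : G.BE, pairDot m (G.dir e) ≠ 0 → φ.val (G.src e) = 0 ∧ φ.val (G.tgt e) = 0) ∧
    ∀ u : G.UE, pairDot m (G.udir u) ≠ 0 → φ.val (G.att u) = 0 ∧ φ.uslope u = 0

/-- Condition (3): on every edge `e` with `m·e = 0` the slope of `φ` is nonzero. -/
def NonzeroSlopeOrth (φ : PL G) (m : Fin n → ℤ) : Prop :=
  (∀ e : G.BE, pairDot m (G.dir e) = 0 → φ.val (G.src e) ≠ φ.val (G.tgt e)) ∧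
    ∀ u : G.UE, pairDot m (G.udir u) = 0 → φ.uslope u ≠ 0

end PL

end TropGraph

/-!
Condition (2) and the edge `e₁` force `φ(v) = 0`, so by nonnegativity every outgoing slope at `v`
is `≥ 0`, and by condition (3) and integrality every slope along an edge `e` with `m·e = 0` is
`≥ 1`. Condition (1) at the trivalent vertex `v` bounds the sum of the slopes at `v` by
`deg v - 2 = 1`, which leaves room for at most one such edge, with slope exactly `1`.
-/

theorem Finset.card_filter_le_sum_of_one_le {ι R : Type*} [AddCommMonoidWithOne R]
    [PartialOrder R] [IsOrderedAddMonoid R] {s : Finset ι} {f : ι → R} {p : ι → Prop}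
    [DecidablePred p] (h0 : ∀ i ∈ s, 0 ≤ f i) (h1 : ∀ i ∈ s, p i → 1 ≤ f i) :
    ((s.filter p).card : R) ≤ ∑ i ∈ s, f i := by
  rw [Finset.card_filter, Nat.cast_sum]
  refine Finset.sum_le_sum fun i hi => ?_
  split_ifs with hp
  · simpa using h1 i hi hp
  · simpa using h0 i hi

theorem one_le_of_eq_intCast {R : Type*} [Ring R] [LinearOrder R] [IsStrictOrderedRing R]
    {x : R} {k : ℤ} (hk : x = k) (h0 : 0 ≤ x) (hne : x ≠ 0) : 1 ≤ x := by
  subst hk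
  have hk0 : 0 ≤ k := by exact_mod_cast h0
  have hk1 : k ≠ 0 := by exact_mod_cast hne
  exact_mod_cast (by omega : 1 ≤ k)

namespace TropGraph.PL

variable {n : ℕ} {G : TropGraph n} {φ : PL G} {m : Fin n → ℤ} {v : G.V}

theorem val_eq_zero_of_adj_nonOrth (hvan : φ.VanishesNonOrth m)
    (he₁ : (∃ e₁ : G.BE, (G.src e₁ = v ∨ G.tgt e₁ = v) ∧ pairDot m (G.dir e₁) ≠ 0) ∨
      ∃ u₁ : G.UE, G.att u₁ = v ∧ pairDot m (G.udir u₁) ≠ 0) :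
    φ.val v = 0 := by
  rcases he₁ with ⟨e, rfl | rfl, hm⟩ | ⟨u, rfl, hm⟩
  · exact (hvan.1 e hm).1
  · exact (hvan.1 e hm).2
  · exact (hvan.2 u hm).1

theorem slopeSum_le_one (hK : φ.CanonicalBound) (htri : G.degree v = 3) :
    φ.slopeSum v ≤ 1 :=
  (hK v).trans_eq (by rw [htri]; norm_num)

theorem slope_src_nonneg (hφ : φ.Nonneg) (hv : φ.val v = 0) {e : G.BE} (he : G.src e = v) :
    0 ≤ φ.val (G.tgt e) - φ.val (G.src e) := by
  rw [he, hv, sub_zero]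
  exact hφ.1 _

theorem slope_tgt_nonneg (hφ : φ.Nonneg) (hv : φ.val v = 0) {e : G.BE} (he : G.tgt e = v) :
    0 ≤ φ.val (G.src e) - φ.val (G.tgt e) := by
  rw [he, hv, sub_zero]
  exact hφ.1 _

theorem one_le_slope_src (hφ : φ.Nonneg) (hv : φ.val v = 0) (horth : φ.NonzeroSlopeOrth m)
    {e : G.BE} (he : G.src e = v) (hm : pairDot m (G.dir e) = 0) :
    1 ≤ φ.val (G.tgt e) - φ.val (G.src e) := by
  obtain ⟨k, hk⟩ := φ.int_slope e
  exact one_le_of_eq_intCast hk (slope_src_nonneg hφ hv he)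
    (sub_ne_zero.mpr (horth.1 e hm).symm)

theorem one_le_slope_tgt (hφ : φ.Nonneg) (hv : φ.val v = 0) (horth : φ.NonzeroSlopeOrth m)
    {e : G.BE} (he : G.tgt e = v) (hm : pairDot m (G.dir e) = 0) :
    1 ≤ φ.val (G.src e) - φ.val (G.tgt e) := by
  obtain ⟨k, hk⟩ := φ.int_slope e
  refine one_le_of_eq_intCast (k := -k) ?_ (slope_tgt_nonneg hφ hv he)
    (sub_ne_zero.mpr (horth.1 e hm))
  push_cast
  linarith

theorem one_le_uslope (hφ : φ.Nonneg) (horth : φ.NonzeroSlopeOrth m) {u : G.UE}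
    (hm : pairDot m (G.udir u) = 0) : 1 ≤ φ.uslope u := by
  have h0 := hφ.2 u
  have hne := horth.2 u hm
  omega

theorem slopeSum_summands_nonneg (hφ : φ.Nonneg) (hv : φ.val v = 0) :
    0 ≤ ∑ e ∈ Finset.univ.filter (fun e => G.src e = v), (φ.val (G.tgt e) - φ.val (G.src e)) ∧
      0 ≤ ∑ e ∈ Finset.univ.filter (fun e => G.tgt e = v), (φ.val (G.src e) - φ.val (G.tgt e)) ∧
      0 ≤ ∑ u ∈ Finset.univ.filter (fun u => G.att u = v), (φ.uslope u : ℝ) :=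
  ⟨Finset.sum_nonneg fun _ he => slope_src_nonneg hφ hv (Finset.mem_filter.1 he).2,
    Finset.sum_nonneg fun _ he => slope_tgt_nonneg hφ hv (Finset.mem_filter.1 he).2,
    Finset.sum_nonneg fun u _ => by exact_mod_cast hφ.2 u⟩

theorem slope_src_le_slopeSum (hφ : φ.Nonneg) (hv : φ.val v = 0) {e : G.BE}
    (he : G.src e = v) : φ.val (G.tgt e) - φ.val (G.src e) ≤ φ.slopeSum v := by
  have hle := Finset.single_le_sum (s := Finset.univ.filter (fun e => G.src e = v))
    (f := fun e => φ.val (G.tgt e) - φ.val (G.src e))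
    (fun _ he' => slope_src_nonneg hφ hv (Finset.mem_filter.1 he').2)
    (Finset.mem_filter.2 ⟨Finset.mem_univ e, he⟩)
  have := slopeSum_summands_nonneg hφ hv
  unfold slopeSum
  linarith

theorem slope_tgt_le_slopeSum (hφ : φ.Nonneg) (hv : φ.val v = 0) {e : G.BE}
    (he : G.tgt e = v) : φ.val (G.src e) - φ.val (G.tgt e) ≤ φ.slopeSum v := by
  have hle := Finset.single_le_sum (s := Finset.univ.filter (fun e => G.tgt e = v))
    (f := fun e => φ.val (G.src e) - φ.val (G.tgt e))
    (fun _ he' => slope_tgt_nonneg hφ hv (Finset.mem_filter.1 he').2)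
    (Finset.mem_filter.2 ⟨Finset.mem_univ e, he⟩)
  have := slopeSum_summands_nonneg hφ hv
  unfold slopeSum
  linarith

theorem uslope_le_slopeSum (hφ : φ.Nonneg) (hv : φ.val v = 0) {u : G.UE}
    (hu : G.att u = v) : (φ.uslope u : ℝ) ≤ φ.slopeSum v := by
  have hle := Finset.single_le_sum (s := Finset.univ.filter (fun u => G.att u = v))
    (f := fun u => (φ.uslope u : ℝ))
    (fun u _ => by exact_mod_cast hφ.2 u) (Finset.mem_filter.2 ⟨Finset.mem_univ u, hu⟩)
  have := slopeSum_summands_nonneg hφ hv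
  unfold slopeSum
  linarith

theorem card_orth_le_slopeSum (hφ : φ.Nonneg) (hv : φ.val v = 0)
    (horth : φ.NonzeroSlopeOrth m) :
    (((Finset.univ.filter
        (fun e => (G.src e = v ∨ G.tgt e = v) ∧ pairDot m (G.dir e) = 0)).card +
      (Finset.univ.filter
        (fun u => G.att u = v ∧ pairDot m (G.udir u) = 0)).card : ℕ) : ℝ) ≤ φ.slopeSum v := by
  have hsrc := Finset.card_filter_le_sum_of_one_le (p := fun e => pairDot m (G.dir e) = 0)
    (s := Finset.univ.filter (fun e => G.src e = v))
    (f := fun e => φ.val (G.tgt e) - φ.val (G.src e))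
    (fun _ he => slope_src_nonneg hφ hv (Finset.mem_filter.1 he).2)
    (fun _ he hm => one_le_slope_src hφ hv horth (Finset.mem_filter.1 he).2 hm)
  have htgt := Finset.card_filter_le_sum_of_one_le (p := fun e => pairDot m (G.dir e) = 0)
    (s := Finset.univ.filter (fun e => G.tgt e = v))
    (f := fun e => φ.val (G.src e) - φ.val (G.tgt e))
    (fun _ he => slope_tgt_nonneg hφ hv (Finset.mem_filter.1 he).2)
    (fun _ he hm => one_le_slope_tgt hφ hv horth (Finset.mem_filter.1 he).2 hm)
  have hatt := Finset.card_filter_le_sum_of_one_le (p := fun u => pairDot m (G.udir u) = 0)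
    (s := Finset.univ.filter (fun u => G.att u = v)) (f := fun u => (φ.uslope u : ℝ))
    (fun u _ => by exact_mod_cast hφ.2 u)
    (fun u _ hm => by exact_mod_cast one_le_uslope hφ horth hm)
  rw [Finset.filter_filter] at hsrc htgt hatt
  have hor : (Finset.univ.filter
      (fun e => (G.src e = v ∨ G.tgt e = v) ∧ pairDot m (G.dir e) = 0)).card ≤
      (Finset.univ.filter (fun e => G.src e = v ∧ pairDot m (G.dir e) = 0)).card +
        (Finset.univ.filter (fun e => G.tgt e = v ∧ pairDot m (G.dir e) = 0)).card := by
    refine (Finset.card_le_card fun e => ?_).trans (Finset.card_union_le _ _)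
    simp only [Finset.mem_filter, Finset.mem_union, Finset.mem_univ, true_and]
    tauto
  have hor' := (Nat.cast_le (α := ℝ)).mpr hor
  unfold slopeSum
  push_cast at hor' ⊢
  linarith

end TropGraph.PL

open TropGraph in
theorem trivalent_at_most_one_orth_edge_and_slope_eq_one_general
    {n : ℕ} (G : TropGraph n) (φ : TropGraph.PL G) (m : Fin n → ℤ)
    (hnn : φ.Nonneg) (h1 : φ.CanonicalBound)
    (h2 : φ.VanishesNonOrth m) (h3 : φ.NonzeroSlopeOrth m) (v : G.V)
    (htri : G.degree v = 3)
    (he₁ : (∃ e₁ : G.BE, (G.src e₁ = v ∨ G.tgt e₁ = v) ∧ pairDot m (G.dir e₁) ≠ 0) ∨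
      ∃ u₁ : G.UE, G.att u₁ = v ∧ pairDot m (G.udir u₁) ≠ 0) :
    ((Finset.univ.filter
        (fun e => (G.src e = v ∨ G.tgt e = v) ∧ pairDot m (G.dir e) = 0)).card +
      (Finset.univ.filter
        (fun u => G.att u = v ∧ pairDot m (G.udir u) = 0)).card ≤ 1) ∧
      (∀ e : G.BE, G.src e = v → pairDot m (G.dir e) = 0 →
        φ.val (G.tgt e) - φ.val (G.src e) = 1) ∧
      (∀ e : G.BE, G.tgt e = v → pairDot m (G.dir e) = 0 →
        φ.val (G.src e) - φ.val (G.tgt e) = 1) ∧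
      ∀ u : G.UE, G.att u = v → pairDot m (G.udir u) = 0 → φ.uslope u = 1 := by
  have hv := PL.val_eq_zero_of_adj_nonOrth h2 he₁
  have hsum := PL.slopeSum_le_one h1 htri
  refine ⟨?_, fun e he hm => ?_, fun e he hm => ?_, fun u hu hm => ?_⟩
  · exact_mod_cast (PL.card_orth_le_slopeSum hnn hv h3).trans hsum
  · exact le_antisymm ((PL.slope_src_le_slopeSum hnn hv he).trans hsum)
      (PL.one_le_slope_src hnn hv h3 he hm)
  · exact le_antisymm ((PL.slope_tgt_le_slopeSum hnn hv he).trans hsum)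
      (PL.one_le_slope_tgt hnn hv h3 he hm)
  · exact_mod_cast le_antisymm ((PL.uslope_le_slopeSum hnn hv hu).trans hsum)
      (by exact_mod_cast PL.one_le_uslope hnn h3 hm)

open TropGraph in
/-- let `φ` be a nonnegative piecewise-linear function with integer slopes
on `Σ` satisfying conditions (1)–(3) with respect to `m ∈ ℤ^n`.  If `v` is a trivalent
vertex (`deg v = 3`) at which `Σ` is balanced (`Σ_{e ∋ v} d_v(e) = 0`) and which has an
adjacent edge `e₁` with `m·e₁ ≠ 0`, then `v` has at most one adjacent edge `e` with
`m·e = 0`, and for such an edge the slope satisfies `s_φ(v,e) = 1`. -/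
theorem trivalent_at_most_one_orth_edge_and_slope_eq_one
    {n : ℕ} (G : TropGraph n) (φ : TropGraph.PL G) (m : Fin n → ℤ)
    (hnn : φ.Nonneg) (h1 : φ.CanonicalBound)
    (h2 : φ.VanishesNonOrth m) (h3 : φ.NonzeroSlopeOrth m) (v : G.V)
    (htri : G.degree v = 3)
    (hbal : (∑ e ∈ Finset.univ.filter (fun e => G.src e = v), G.dir e) -
        (∑ e ∈ Finset.univ.filter (fun e => G.tgt e = v), G.dir e) +
        (∑ u ∈ Finset.univ.filter (fun u => G.att u = v), G.udir u) = 0)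
    (he₁ : (∃ e₁ : G.BE, (G.src e₁ = v ∨ G.tgt e₁ = v) ∧ pairDot m (G.dir e₁) ≠ 0) ∨
      ∃ u₁ : G.UE, G.att u₁ = v ∧ pairDot m (G.udir u₁) ≠ 0) :
    ((Finset.univ.filter
        (fun e => (G.src e = v ∨ G.tgt e = v) ∧ pairDot m (G.dir e) = 0)).card +
      (Finset.univ.filter
        (fun u => G.att u = v ∧ pairDot m (G.udir u) = 0)).card ≤ 1) ∧
      (∀ e : G.BE, G.src e = v → pairDot m (G.dir e) = 0 →
        φ.val (G.tgt e) - φ.val (G.src e) = 1) ∧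
      (∀ e : G.BE, G.tgt e = v → pairDot m (G.dir e) = 0 →
        φ.val (G.src e) - φ.val (G.tgt e) = 1) ∧
      ∀ u : G.UE, G.att u = v → pairDot m (G.udir u) = 0 → φ.uslope u = 1 :=
  trivalent_at_most_one_orth_edge_and_slope_eq_one_general G φ m hnn h1 h2 h3 v htri he₁
end

section
/- (Pruning lemma, Laplacian part.) Let φ be a piecewise-linear function with integer slopes on Σ satisfying Δ(φ) + K_Σ ≥ 0. Let v be a vertex of Σ and let T ⊆ Σ be a subtree containing v such that v is the only vertex of T incident to edges of Σ not in T, and such that exactly one edge e of T is adjacent to v. Let Σ' = Σ∖(T∖{v}) be the graph obtained from Σ by deleting all edges of T and all vertices of T other than v. If s_φ(v,e) > 0, then the restriction φ|_{Σ'} satisfies Δ(φ|_{Σ'}) + K_{Σ'} ≥ 0, where K_{Σ'} is the canonical divisor of Σ'. -/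
/-!
Removing the tree `T` only deletes edges at the vertices of `Σ'` that lie in `T`, and the only
such vertex is `v`, which loses exactly the edge `e`.  Deleting edges along which `φ` has
slope `≥ 1` at `w` lowers the slope sum at `w` by at least as much as the degree, so
`Δ(φ) + K ≥ 0` survives; an integer slope `s_φ(v,e) > 0` is `≥ 1`.
-/

attribute [local instance] Classical.propDecidable

open Finset

theorem sum_filter_sub_card_le_of_one_le {α : Type*} [Fintype α] (p : α → Prop) (S : Finset α)
    (f : α → ℝ) (hf : ∀ x ∈ S, p x → 1 ≤ f x) :
    ∑ x ∈ univ.filter (fun x => p x ∧ x ∉ S), f x - #(univ.filter (fun x => p x ∧ x ∉ S)) ≤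
      ∑ x ∈ univ.filter p, f x - #(univ.filter p) := by
  simp only [← nsmul_one, ← sum_const, ← sum_sub_distrib]
  refine sum_le_sum_of_subset_of_nonneg (monotone_filter_right _ fun _ _ h => h.1) ?_
  simp only [mem_filter, mem_univ, true_and, not_and, not_not]
  intro x hpx hS
  linarith [hf x (hS hpx) hpx]

namespace TropGraph

variable {n : ℕ}

noncomputable def restrictDegree (G : TropGraph n) (ET : Finset G.BE) (UT : Finset G.UE)
    (w : G.V) : ℕ :=
  (univ.filter (fun e => G.src e = w ∧ e ∉ ET)).card +
    (univ.filter (fun e => G.tgt e = w ∧ e ∉ ET)).card +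
    (univ.filter (fun u => G.att u = w ∧ u ∉ UT)).card

namespace PL

variable {G : TropGraph n}

noncomputable def restrictSlopeSum (φ : PL G) (ET : Finset G.BE) (UT : Finset G.UE)
    (w : G.V) : ℝ :=
  (∑ e ∈ univ.filter (fun e => G.src e = w ∧ e ∉ ET), (φ.val (G.tgt e) - φ.val (G.src e))) +
    (∑ e ∈ univ.filter (fun e => G.tgt e = w ∧ e ∉ ET), (φ.val (G.src e) - φ.val (G.tgt e))) +
    ∑ u ∈ univ.filter (fun u => G.att u = w ∧ u ∉ UT), (φ.uslope u : ℝ)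

theorem restrictSlopeSum_le_of_one_le_slope {φ : PL G} {ET : Finset G.BE} {UT : Finset G.UE}
    {w : G.V} (hK : φ.slopeSum w ≤ (G.degree w : ℝ) - 2)
    (hsrc : ∀ e ∈ ET, G.src e = w → 1 ≤ φ.val (G.tgt e) - φ.val (G.src e))
    (htgt : ∀ e ∈ ET, G.tgt e = w → 1 ≤ φ.val (G.src e) - φ.val (G.tgt e))
    (hatt : ∀ u ∈ UT, G.att u = w → (1 : ℝ) ≤ φ.uslope u) :
    φ.restrictSlopeSum ET UT w ≤ (G.restrictDegree ET UT w : ℝ) - 2 := by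
  unfold slopeSum degree at hK
  unfold restrictSlopeSum restrictDegree
  push_cast at hK ⊢
  linarith [sum_filter_sub_card_le_of_one_le _ ET _ hsrc,
    sum_filter_sub_card_le_of_one_le _ ET _ htgt,
    sum_filter_sub_card_le_of_one_le _ UT _ hatt]

theorem one_le_slope_of_pos (φ : PL G) (e : G.BE)
    (h : 0 < φ.val (G.tgt e) - φ.val (G.src e)) : 1 ≤ φ.val (G.tgt e) - φ.val (G.src e) := by
  obtain ⟨k, hk⟩ := φ.int_slope e
  rw [hk] at h ⊢
  exact_mod_cast (Int.cast_pos.mp h : 0 < k)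

theorem one_le_neg_slope_of_pos (φ : PL G) (e : G.BE)
    (h : 0 < φ.val (G.src e) - φ.val (G.tgt e)) : 1 ≤ φ.val (G.src e) - φ.val (G.tgt e) := by
  obtain ⟨k, hk⟩ := φ.int_slope e
  rw [show φ.val (G.src e) - φ.val (G.tgt e) = ((-k : ℤ) : ℝ) by push_cast; linarith] at h ⊢
  exact_mod_cast (Int.cast_pos.mp h : 0 < -k)

end PL

end TropGraph

open TropGraph in
theorem pruning_laplacian_general
    {n : ℕ} (G : TropGraph n) (φ : TropGraph.PL G)
    (hK : φ.CanonicalBound)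
    (VT : Finset G.V) (ET : Finset G.BE) (UT : Finset G.UE) (v : G.V) (e : G.BE)
    -- T is a subgraph of Σ
    (hTsub : ∀ e' ∈ ET, G.src e' ∈ VT ∧ G.tgt e' ∈ VT)
    (hUsub : ∀ u ∈ UT, G.att u ∈ VT)
    -- e is the unique edge of T adjacent to v
    (heuniq : ∀ e' ∈ ET, (G.src e' = v ∨ G.tgt e' = v) → e' = e)
    (huuniq : ∀ u ∈ UT, G.att u ≠ v)
    -- the slope of φ at v along e is positive
    (hpos : (G.src e = v ∧ 0 < φ.val (G.tgt e) - φ.val (G.src e)) ∨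
      (G.tgt e = v ∧ 0 < φ.val (G.src e) - φ.val (G.tgt e))) :
    -- conclusion: Δ(φ|_{Σ'}) + K_{Σ'} ≥ 0 at every vertex of Σ'
    ∀ w : G.V, w ∉ VT ∨ w = v →
      (∑ e' ∈ Finset.univ.filter (fun e' => G.src e' = w ∧ e' ∉ ET),
          (φ.val (G.tgt e') - φ.val (G.src e'))) +
        (∑ e' ∈ Finset.univ.filter (fun e' => G.tgt e' = w ∧ e' ∉ ET),
          (φ.val (G.src e') - φ.val (G.tgt e'))) +
        (∑ u ∈ Finset.univ.filter (fun u => G.att u = w ∧ u ∉ UT), (φ.uslope u : ℝ))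
      ≤ (((Finset.univ.filter (fun e' => G.src e' = w ∧ e' ∉ ET)).card +
          (Finset.univ.filter (fun e' => G.tgt e' = w ∧ e' ∉ ET)).card +
          (Finset.univ.filter (fun u => G.att u = w ∧ u ∉ UT)).card : ℕ) : ℝ) - 2 := by
  rintro w (hwT | rfl)
  · refine PL.restrictSlopeSum_le_of_one_le_slope (hK w) ?_ ?_ ?_
    · exact fun e' he' hw => absurd (hw ▸ (hTsub e' he').1) hwT
    · exact fun e' he' hw => absurd (hw ▸ (hTsub e' he').2) hwT
    · exact fun u hu hw => absurd (hw ▸ hUsub u hu) hwT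
  · have hne := G.src_ne_tgt e
    refine PL.restrictSlopeSum_le_of_one_le_slope (hK w) ?_ ?_ ?_
    · rintro e' he' hw
      obtain rfl := heuniq e' he' (.inl hw)
      rcases hpos with ⟨-, h⟩ | ⟨h, -⟩
      exacts [φ.one_le_slope_of_pos e' h, absurd (hw.trans h.symm) hne]
    · rintro e' he' hw
      obtain rfl := heuniq e' he' (.inr hw)
      rcases hpos with ⟨h, -⟩ | ⟨-, h⟩
      exacts [absurd (h.trans hw.symm) hne, φ.one_le_neg_slope_of_pos e' h]
    · exact fun u hu hw => absurd hw (huuniq u hu)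

open TropGraph in
/-- Pruning lemma, Laplacian part: let `φ` be a piecewise-linear function
with integer slopes on `Σ` satisfying `Δ(φ) + K_Σ ≥ 0`.  Let `T ⊆ Σ` be a subtree
(connected with `#edges + 1 = #vertices`, possibly together with some unbounded edges)
containing a vertex `v`, such that `v` is the only vertex of `T` incident to edges of
`Σ` not in `T` and exactly one edge `e` of `T` is adjacent to `v`.  If `s_φ(v,e) > 0`,
then on the graph `Σ' = Σ∖(T∖{v})` (delete all edges of `T` and all vertices of `T`
other than `v`) the restriction `φ|_{Σ'}` satisfies `Δ(φ|_{Σ'}) + K_{Σ'} ≥ 0`. -/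
theorem pruning_laplacian
    {n : ℕ} (G : TropGraph n) (φ : TropGraph.PL G)
    (hK : φ.CanonicalBound)
    (VT : Finset G.V) (ET : Finset G.BE) (UT : Finset G.UE) (v : G.V) (e : G.BE)
    -- T is a subgraph of Σ
    (hTsub : ∀ e' ∈ ET, G.src e' ∈ VT ∧ G.tgt e' ∈ VT)
    (hUsub : ∀ u ∈ UT, G.att u ∈ VT)
    (hvT : v ∈ VT)
    -- T is a tree: connected and acyclic
    (hTconn : ∀ w ∈ VT, Relation.ReflTransGen
      (fun a b => ∃ e' ∈ ET, (G.src e' = a ∧ G.tgt e' = b) ∨ (G.src e' = b ∧ G.tgt e' = a))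
      v w)
    (hTacyc : ET.card + 1 = VT.card)
    -- v is the only vertex of T incident to edges of Σ not in T
    (hiso : ∀ w ∈ VT, w ≠ v →
      (∀ e' : G.BE, (G.src e' = w ∨ G.tgt e' = w) → e' ∈ ET) ∧
      ∀ u : G.UE, G.att u = w → u ∈ UT)
    -- e is the unique edge of T adjacent to v
    (heT : e ∈ ET) (hev : G.src e = v ∨ G.tgt e = v)
    (heuniq : ∀ e' ∈ ET, (G.src e' = v ∨ G.tgt e' = v) → e' = e)
    (huuniq : ∀ u ∈ UT, G.att u ≠ v)
    -- the slope of φ at v along e is positive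
    (hpos : (G.src e = v ∧ 0 < φ.val (G.tgt e) - φ.val (G.src e)) ∨
      (G.tgt e = v ∧ 0 < φ.val (G.src e) - φ.val (G.tgt e))) :
    -- conclusion: Δ(φ|_{Σ'}) + K_{Σ'} ≥ 0 at every vertex of Σ'
    ∀ w : G.V, w ∉ VT ∨ w = v →
      (∑ e' ∈ Finset.univ.filter (fun e' => G.src e' = w ∧ e' ∉ ET),
          (φ.val (G.tgt e') - φ.val (G.src e'))) +
        (∑ e' ∈ Finset.univ.filter (fun e' => G.tgt e' = w ∧ e' ∉ ET),
          (φ.val (G.src e') - φ.val (G.tgt e'))) +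
        (∑ u ∈ Finset.univ.filter (fun u => G.att u = w ∧ u ∉ UT), (φ.uslope u : ℝ))
      ≤ (((Finset.univ.filter (fun e' => G.src e' = w ∧ e' ∉ ET)).card +
          (Finset.univ.filter (fun e' => G.tgt e' = w ∧ e' ∉ ET)).card +
          (Finset.univ.filter (fun u => G.att u = w ∧ u ∉ UT)).card : ℕ) : ℝ) - 2 :=
  pruning_laplacian_general G φ hK VT ET UT v e hTsub hUsub heuniq huuniq hpos
end

section
/- (Combinatorial core of the weak well-spacedness theorem.) Let Σ be a finite connected graph as in the context, and let Γ' ⊆ Σ be a subgraph containing at least one cycle (h¹(Γ') > 0) such that: the boundary ∂Γ' (vertices of Γ' incident to an edge of Σ not in Γ') consists of a single vertex v₀ of degree 3 in Σ; exactly one edge e₀ of v₀ lies in Γ'; and every edge of Σ incident to a vertex of Γ'∖{v₀} lies in Γ'. Let φ be a nonnegative piecewise-linear function with integer slopes on Σ such that Δ(φ) + K_Σ ≥ 0, φ vanishes identically on every edge of Σ not in Γ', and the slope of φ is nonzero on every edge of Γ'. Let Γ be a cycle in Γ' for which h_Γ = min_{v' ∈ V(Γ)} φ(v') is minimal among all cycles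 contained in Γ'. Then deg(D_φ) ≤ 1, where deg(D_φ) is the degree of the divisor of φ on Γ in Γ'. -/
attribute [local instance] Classical.propDecidable

/-- A walk of length `k` from `a` to `b` along the relation `adj`. -/
inductive WalkN {α : Type*} (adj : α → α → Prop) : α → α → ℕ → Prop
  | refl (a : α) : WalkN adj a a 0
  | tail {a b c : α} {k : ℕ} : WalkN adj a b k → adj b c → WalkN adj a c (k + 1)

/-- Mutual reachability is an equivalence relation. -/
def connSetoid {α : Type*} (adj : α → α → Prop) : Setoid α where
  r a b := Relation.ReflTransGen adj a b ∧ Relation.ReflTransGen adj b a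
  iseqv := ⟨fun _ => ⟨.refl, .refl⟩, fun h => ⟨h.2, h.1⟩,
    fun h1 h2 => ⟨h1.1.trans h2.1, h2.2.trans h1.2⟩⟩

/-- The number of connected components of the graph with adjacency relation `adj`. -/
noncomputable def compCount {α : Type*} (adj : α → α → Prop) : ℕ :=
  Nat.card (Quotient (connSetoid adj))


/-!
Let `h` be the minimum of `φ` on `Γ`. Every cycle of `Γ'` reaches height `≥ h` by minimality of `Γ`, so
the edges of `Γ'` with both ends below `h` form a forest. Summing `Δ(φ) + K_Σ ≥ 0` over one of its
components `C` bounds `Σ (s - 1)` over the edges and leaves leaving `C` by `2 (#E(C) - #V(C)) ≤ -2`,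
where `s` is the outgoing slope. An exit inside `Γ'` climbs to height `≥ h`, so `s ≥ 1`; the only
other exits are the edges at `v₀` outside `Γ'`, where `φ` is flat (`s - 1 = -1`), and there are at
most two of them. Hence `v₀ ∈ C` and every exit of `C` inside `Γ'` has slope exactly `1`. So the part
of `Γ'` below `h` is connected, and two distinct edges descending from the bottom of `Γ` would close a
cycle of `Γ'` through a point below `h`. At most one edge descends, with slope `1`: `deg(D_φ) ≤ 1`.
-/

theorem Finset.sum_sum_filter_and_eq {ι κ M : Type*} [AddCommMonoid M] (S : Finset κ)
    (s : Finset ι) (p r : ι → Prop) (k : ι → κ) (g : ι → M)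
    [∀ w, DecidablePred fun i => p i ∧ k i = w ∧ r i]
    [DecidablePred fun i => p i ∧ k i ∈ S ∧ r i] :
    ∑ w ∈ S, ∑ i ∈ s.filter (fun i => p i ∧ k i = w ∧ r i), g i =
      ∑ i ∈ s.filter (fun i => p i ∧ k i ∈ S ∧ r i), g i := by
  rw [← Finset.sum_fiberwise_of_maps_to (g := k) (t := S) fun i hi => (Finset.mem_filter.1 hi).2.2.1]
  refine Finset.sum_congr rfl fun w hw => Finset.sum_congr ?_ fun _ _ => rfl
  ext i
  simp only [Finset.mem_filter]
  constructor
  · rintro ⟨hs, hp, rfl, hr⟩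
    exact ⟨⟨hs, hp, hw, hr⟩, rfl⟩
  · rintro ⟨⟨hs, hp, -, hr⟩, rfl⟩
    exact ⟨hs, hp, rfl, hr⟩

namespace TropGraph

open Finset Relation

variable {n : ℕ} {G : TropGraph n}

def Joins (G : TropGraph n) (e : G.BE) (a b : G.V) : Prop :=
  (G.src e = a ∧ G.tgt e = b) ∨ (G.src e = b ∧ G.tgt e = a)

def Adj (G : TropGraph n) (E : Finset G.BE) (a b : G.V) : Prop :=
  ∃ e ∈ E, G.Joins e a b

theorem Joins.symm {e : G.BE} {a b : G.V} (h : G.Joins e a b) : G.Joins e b a :=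
  Or.symm h

theorem Joins.ne {e : G.BE} {a b : G.V} (h : G.Joins e a b) : a ≠ b := by
  rintro rfl
  obtain ⟨h₁, h₂⟩ | ⟨h₁, h₂⟩ := h <;> exact G.src_ne_tgt e (h₁.trans h₂.symm)

theorem Joins.src_tgt_of {e : G.BE} {a b : G.V} {p : G.V → Prop} (h : G.Joins e a b)
    (ha : p a) (hb : p b) : p (G.src e) ∧ p (G.tgt e) := by
  obtain ⟨rfl, rfl⟩ | ⟨rfl, rfl⟩ := h
  exacts [⟨ha, hb⟩, ⟨hb, ha⟩]

theorem Joins.of_src_tgt {e : G.BE} {a b : G.V} {p : G.V → Prop} (h : G.Joins e a b)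
    (hs : p (G.src e)) (ht : p (G.tgt e)) : p a ∧ p b := by
  obtain ⟨rfl, rfl⟩ | ⟨rfl, rfl⟩ := h
  exacts [⟨hs, ht⟩, ⟨ht, hs⟩]

theorem Joins.src_eq_or_tgt_eq {e : G.BE} {a b : G.V} (h : G.Joins e a b) :
    G.src e = a ∨ G.tgt e = a :=
  h.imp And.left And.right

theorem joins_src_tgt (e : G.BE) : G.Joins e (G.src e) (G.tgt e) := Or.inl ⟨rfl, rfl⟩

theorem Adj.symm {E : Finset G.BE} {a b : G.V} (h : G.Adj E a b) : G.Adj E b a :=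
  let ⟨e, he, hj⟩ := h; ⟨e, he, hj.symm⟩

theorem Adj.mono {E E₂ : Finset G.BE} (hE : E ⊆ E₂) {a b : G.V} (h : G.Adj E a b) :
    G.Adj E₂ a b :=
  let ⟨e, he, hj⟩ := h; ⟨e, hE he, hj⟩

theorem reflTransGen_adj_symm {E : Finset G.BE} {a b : G.V}
    (h : ReflTransGen (G.Adj E) a b) : ReflTransGen (G.Adj E) b a := by
  induction h with
  | refl => rfl
  | tail _ hbc ih => exact ih.head hbc.symm

theorem reflTransGen_adj_mono {E E₂ : Finset G.BE} (hE : E ⊆ E₂) {a b : G.V}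
    (h : ReflTransGen (G.Adj E) a b) : ReflTransGen (G.Adj E₂) a b :=
  ReflTransGen.mono (fun _ _ => Adj.mono hE) _ _ h

def toSimpleGraph (G : TropGraph n) (E : Finset G.BE) : SimpleGraph G.V where
  Adj := G.Adj E
  symm := ⟨fun _ _ => Adj.symm⟩
  loopless := ⟨fun _ ⟨_, _, hj⟩ => hj.ne rfl⟩

noncomputable def incidence (G : TropGraph n) (E : Finset G.BE) (w : G.V) : ℕ :=
  #(E.filter fun e => G.src e = w) + #(E.filter fun e => G.tgt e = w)

theorem incidence_insert {E : Finset G.BE} {e : G.BE} (he : e ∉ E) {a b : G.V}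
    (hj : G.Joins e a b) (w : G.V) :
    G.incidence (insert e E) w =
      G.incidence E w + ((if w = a then 1 else 0) + if w = b then 1 else 0) := by
  have hne := hj.ne
  unfold incidence
  rw [filter_insert, filter_insert]
  obtain ⟨rfl, rfl⟩ | ⟨rfl, rfl⟩ := hj <;>
    by_cases h₁ : G.src e = w <;> by_cases h₂ : G.tgt e = w <;>
    simp_all [card_insert_of_notMem, eq_comm] <;> omega

structure IsCycle (G : TropGraph n) (P : Finset G.V) (E : Finset G.BE) : Prop where
  nonempty : P.Nonempty
  endpoints_mem : ∀ e ∈ E, G.src e ∈ P ∧ G.tgt e ∈ P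
  connected : ∀ a ∈ P, ∀ b ∈ P, ReflTransGen (G.Adj E) a b
  incidence_eq_two : ∀ w ∈ P, G.incidence E w = 2

theorem IsCycle.exists_incident {P : Finset G.V} {E : Finset G.BE} (hc : G.IsCycle P E)
    {w : G.V} (hw : w ∈ P) : ∃ e ∈ E, G.src e = w ∨ G.tgt e = w := by
  by_contra! h
  have := hc.incidence_eq_two w hw
  simp_all [incidence, filter_eq_empty_iff.mpr]

theorem IsCycle.subset {P₂ P' : Finset G.V} {E₂ : Finset G.BE} (hc : G.IsCycle P₂ E₂)
    (hE₂ : ∀ e ∈ E₂, G.src e ∈ P' ∧ G.tgt e ∈ P') : P₂ ⊆ P' := fun w hw => by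
  obtain ⟨e, he, h | h⟩ := hc.exists_incident hw
  exacts [h ▸ (hE₂ e he).1, h ▸ (hE₂ e he).2]

-- Both end indicators are added so that the identity also covers the trivial path.
theorem exists_edges_of_isPath {E : Finset G.BE} {a b : G.V}
    (p : (G.toSimpleGraph E).Walk a b) (hp : p.IsPath) :
    ∃ E₂ ⊆ E, (∀ e ∈ E₂, G.src e ∈ p.support ∧ G.tgt e ∈ p.support) ∧
      (∀ x ∈ p.support, ReflTransGen (G.Adj E₂) a x) ∧
      ∀ w, G.incidence E₂ w + ((if w = a then 1 else 0) + if w = b then 1 else 0) =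
        if w ∈ p.support then 2 else 0 := by
  induction p with
  | @nil u =>
    refine ⟨∅, empty_subset _, by simp, fun x hx => by simp_all [ReflTransGen.refl], fun w => ?_⟩
    by_cases hw : w = u <;> simp [incidence, hw]
  | @cons a c b hac p ih =>
    rw [SimpleGraph.Walk.cons_isPath_iff] at hp
    obtain ⟨E₂, hsub, hends, hreach, hinc⟩ := ih hp.1
    have hadj : G.Adj E a c := hac
    obtain ⟨e, heE, hj⟩ := hadj
    have heE₂ : e ∉ E₂ := fun he => hp.2 (hj.of_src_tgt (hends e he).1 (hends e he).2).1
    have hc : c ∈ p.support := p.start_mem_support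
    refine ⟨insert e E₂, insert_subset heE hsub, fun e' he' => ?_, fun x hx => ?_, fun w => ?_⟩
    · rw [SimpleGraph.Walk.support_cons, List.mem_cons, List.mem_cons]
      obtain rfl | he' := mem_insert.mp he'
      · obtain ⟨h₁, h₂⟩ | ⟨h₁, h₂⟩ := hj <;> simp [h₁, h₂, hc]
      · exact ⟨Or.inr (hends e' he').1, Or.inr (hends e' he').2⟩
    · rw [SimpleGraph.Walk.support_cons, List.mem_cons] at hx
      obtain rfl | hx := hx
      · exact .refl
      · exact .head ⟨e, mem_insert_self _ _, hj⟩
          (reflTransGen_adj_mono (subset_insert _ _) (hreach x hx))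
    · have hac := hj.ne
      have := hinc w
      rw [incidence_insert heE₂ hj, SimpleGraph.Walk.support_cons]
      simp only [List.mem_cons]
      by_cases hwa : w = a
      · subst hwa
        simp_all
      · split_ifs at this ⊢ <;> simp_all

theorem exists_isCycle_of_joins {E : Finset G.BE} {f : G.BE} {a b : G.V}
    (hf : G.Joins f a b) (hfE : f ∉ E) (h : ReflTransGen (G.Adj E) a b) :
    ∃ P₂ E₂, G.IsCycle P₂ E₂ ∧ E₂ ⊆ insert f E ∧ a ∈ P₂ := by
  obtain ⟨p⟩ := (SimpleGraph.reachable_iff_reflTransGen (G := G.toSimpleGraph E) a b).mpr h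
  set q : (G.toSimpleGraph E).Walk a b := p.toPath.1
  obtain ⟨E₂, hsub, hends, hreach, hinc⟩ := exists_edges_of_isPath q p.toPath.isPath
  have hfE₂ : f ∉ E₂ := fun h => hfE (hsub h)
  refine ⟨q.support.toFinset, insert f E₂, ⟨⟨a, by simp⟩, fun e he => ?_, fun x hx y hy => ?_,
    fun w hw => ?_⟩, insert_subset_insert f hsub, by simp⟩
  · simp only [List.mem_toFinset]
    obtain rfl | he := mem_insert.mp he
    · exact hf.src_tgt_of q.start_mem_support q.end_mem_support
    · exact hends e he
  · simp only [List.mem_toFinset] at hx hy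
    exact reflTransGen_adj_mono (subset_insert f E₂)
      ((reflTransGen_adj_symm (hreach x hx)).trans (hreach y hy))
  · have := hinc w
    rw [if_pos (List.mem_toFinset.mp hw)] at this
    rw [incidence_insert hfE₂ hf, this]

noncomputable def reachSet (G : TropGraph n) (E : Finset G.BE) (a : G.V) : Finset G.V :=
  univ.filter (ReflTransGen (G.Adj E) a)

@[simp]
theorem mem_reachSet {E : Finset G.BE} {a v : G.V} :
    v ∈ G.reachSet E a ↔ ReflTransGen (G.Adj E) a v := by
  simp [reachSet]

theorem mem_reachSet_of_joins {E : Finset G.BE} {e : G.BE} (he : e ∈ E) {a x y : G.V}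
    (hj : G.Joins e x y) (hx : x ∈ G.reachSet E a) : y ∈ G.reachSet E a :=
  mem_reachSet.2 (.tail (mem_reachSet.1 hx) ⟨e, he, hj⟩)

theorem forall_mem_reachSet {E : Finset G.BE} {a : G.V} {p : G.V → Prop} (ha : p a)
    (hE : ∀ e ∈ E, p (G.src e) ∧ p (G.tgt e)) : ∀ v ∈ G.reachSet E a, p v := by
  intro v hv
  obtain rfl | ⟨c, -, e, he, hj⟩ := (mem_reachSet.1 hv).cases_tail
  · exact ha
  · exact (hj.of_src_tgt (hE e he).1 (hE e he).2).2

noncomputable def edgesWithin (G : TropGraph n) (C : Finset G.V) : Finset G.BE :=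
  univ.filter fun e => G.src e ∈ C ∧ G.tgt e ∈ C

@[simp]
theorem mem_edgesWithin {C : Finset G.V} {e : G.BE} :
    e ∈ G.edgesWithin C ↔ G.src e ∈ C ∧ G.tgt e ∈ C := by
  simp [edgesWithin]

theorem reflTransGen_edgesWithin_reachSet {E : Finset G.BE} {a v : G.V}
    (h : ReflTransGen (G.Adj E) a v) :
    ReflTransGen (G.Adj (E ∩ G.edgesWithin (G.reachSet E a))) a v := by
  induction h with
  | refl => exact .refl
  | tail hab hbc ih =>
    obtain ⟨e, he, hj⟩ := hbc
    have hc := mem_reachSet_of_joins he hj (mem_reachSet.2 hab)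
    exact ih.tail ⟨e, mem_inter.2 ⟨he, mem_edgesWithin.2 (hj.src_tgt_of (mem_reachSet.2 hab) hc)⟩, hj⟩

theorem reflTransGen_erase_or {E : Finset G.BE} {e : G.BE} {v : G.V}
    (h : ReflTransGen (G.Adj E) (G.src e) v) :
    ReflTransGen (G.Adj (E.erase e)) (G.src e) v ∨ ReflTransGen (G.Adj (E.erase e)) (G.tgt e) v := by
  induction h with
  | refl => exact Or.inl .refl
  | @tail b c _ hbc ih =>
    obtain ⟨e', he', hj⟩ := hbc
    by_cases hee : e' = e
    · subst hee
      obtain ⟨-, rfl⟩ | ⟨rfl, -⟩ := hj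
      exacts [Or.inr .refl, Or.inl .refl]
    · have hadj : G.Adj (E.erase e) b c := ⟨e', mem_erase.2 ⟨hee, he'⟩, hj⟩
      exact ih.imp (·.tail hadj) (·.tail hadj)

theorem notMem_reachSet_of_mem_sdiff {E : Finset G.BE} {a : G.V} {e : G.BE}
    (he : e ∈ E \ G.edgesWithin (G.reachSet E a)) :
    G.src e ∉ G.reachSet E a ∧ G.tgt e ∉ G.reachSet E a := by
  obtain ⟨heE, hw⟩ := mem_sdiff.1 he
  have h₁ := mem_reachSet_of_joins heE (joins_src_tgt e) (a := a)
  have h₂ := mem_reachSet_of_joins heE (joins_src_tgt e).symm (a := a)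
  rw [mem_edgesWithin] at hw
  tauto

theorem reflTransGen_sdiff_edgesWithin_reachSet {E : Finset G.BE} {a b v : G.V}
    (hab : ¬ ReflTransGen (G.Adj E) a b) (h : ReflTransGen (G.Adj E) b v) :
    ReflTransGen (G.Adj (E \ G.edgesWithin (G.reachSet E a))) b v := by
  refine reflTransGen_adj_mono (fun e he => ?_) (reflTransGen_edgesWithin_reachSet h)
  obtain ⟨heE, hb⟩ := mem_inter.1 he
  refine mem_sdiff.2 ⟨heE, fun ha => hab ?_⟩
  exact (mem_reachSet.1 (mem_edgesWithin.1 ha).1).trans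
    (reflTransGen_adj_symm (mem_reachSet.1 (mem_edgesWithin.1 hb).1))

theorem card_add_one_le_card_of_forall_not_isCycle {C : Finset G.V} {a : G.V} (E : Finset G.BE)
    (ha : a ∈ C) (hends : ∀ e ∈ E, G.src e ∈ C ∧ G.tgt e ∈ C)
    (hconn : ∀ v ∈ C, ReflTransGen (G.Adj E) a v)
    (hacyc : ∀ P₂ E₂, G.IsCycle P₂ E₂ → ¬ E₂ ⊆ E) : #E + 1 ≤ #C := by
  induction E using Finset.strongInduction generalizing C a with
  | H E ih =>
  obtain rfl | ⟨e, he⟩ := E.eq_empty_or_nonempty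
  · simpa using card_pos.2 ⟨a, ha⟩
  set E' := E.erase e
  have hsep : ¬ ReflTransGen (G.Adj E') (G.src e) (G.tgt e) := fun h => by
    obtain ⟨P₂, E₂, hc, hsub, -⟩ := exists_isCycle_of_joins (joins_src_tgt e) (notMem_erase e E) h
    exact hacyc P₂ E₂ hc (by rwa [insert_erase he] at hsub)
  set R := G.reachSet E' (G.src e)
  have hE'E : E' ⊂ E := erase_ssubset he
  have hacyc' : ∀ E₁ ⊆ E', ∀ P₂ E₂, G.IsCycle P₂ E₂ → ¬ E₂ ⊆ E₁ := fun E₁ h₁ P₂ E₂ hc hsub =>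
    hacyc P₂ E₂ hc (hsub.trans (h₁.trans hE'E.subset))
  have h₁ := ih (E' ∩ G.edgesWithin R) (inter_subset_left.trans_ssubset hE'E)
    (C := C ∩ R) (a := G.src e) (mem_inter.2 ⟨(hends e he).1, mem_reachSet.2 .refl⟩)
    (fun e' he' => by
      obtain ⟨hs, ht⟩ := hends e' (mem_of_mem_erase (mem_inter.1 he').1)
      obtain ⟨hs', ht'⟩ := mem_edgesWithin.1 (mem_inter.1 he').2
      exact ⟨mem_inter.2 ⟨hs, hs'⟩, mem_inter.2 ⟨ht, ht'⟩⟩)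
    (fun v hv => reflTransGen_edgesWithin_reachSet (mem_reachSet.1 (mem_inter.1 hv).2))
    (hacyc' _ inter_subset_left)
  have h₂ := ih (E' \ G.edgesWithin R) (sdiff_subset.trans_ssubset hE'E)
    (C := C \ R) (a := G.tgt e) (mem_sdiff.2 ⟨(hends e he).2, fun h => hsep (mem_reachSet.1 h)⟩)
    (fun e' he' => by
      obtain ⟨hs, ht⟩ := hends e' (mem_of_mem_erase (mem_sdiff.1 he').1)
      obtain ⟨hs', ht'⟩ := notMem_reachSet_of_mem_sdiff he'
      exact ⟨mem_sdiff.2 ⟨hs, hs'⟩, mem_sdiff.2 ⟨ht, ht'⟩⟩)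
    (fun v hv => by
      obtain ⟨hvC, hvR⟩ := mem_sdiff.1 hv
      have hv' := (reflTransGen_adj_symm (hconn _ (hends e he).1)).trans (hconn v hvC)
      exact reflTransGen_sdiff_edgesWithin_reachSet hsep
        ((reflTransGen_erase_or hv').resolve_left fun h => hvR (mem_reachSet.2 h)))
    (hacyc' _ sdiff_subset)
  have hC := card_inter_add_card_sdiff C R
  have hE := card_inter_add_card_sdiff E' (G.edgesWithin R)
  have : #E' + 1 = #E := card_erase_add_one he
  omega

theorem card_edgesWithin_reachSet_add_one_le {E : Finset G.BE} {a : G.V}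
    (hacyc : ∀ P₂ E₂, G.IsCycle P₂ E₂ → ¬ E₂ ⊆ G.edgesWithin (G.reachSet E a)) :
    #(G.edgesWithin (G.reachSet E a)) + 1 ≤ #(G.reachSet E a) :=
  card_add_one_le_card_of_forall_not_isCycle _ (mem_reachSet.2 .refl)
    (fun _ he => mem_edgesWithin.1 he)
    (fun _ hv => reflTransGen_adj_mono inter_subset_right
      (reflTransGen_edgesWithin_reachSet (mem_reachSet.1 hv)))
    hacyc

noncomputable def edgesLeaving (G : TropGraph n) (C : Finset G.V) : Finset G.BE :=
  univ.filter fun e => (G.src e ∈ C ∧ G.tgt e ∉ C) ∨ (G.tgt e ∈ C ∧ G.src e ∉ C)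

noncomputable def leavesAt (G : TropGraph n) (C : Finset G.V) : Finset G.UE :=
  univ.filter fun u => G.att u ∈ C

theorem mem_edgesLeaving_of_joins {C : Finset G.V} {e : G.BE} {a b : G.V} (hj : G.Joins e a b)
    (ha : a ∈ C) (hb : b ∉ C) : e ∈ G.edgesLeaving C := by
  simp only [edgesLeaving, mem_filter, mem_univ, true_and]
  obtain ⟨rfl, rfl⟩ | ⟨rfl, rfl⟩ := hj
  exacts [Or.inl ⟨ha, hb⟩, Or.inr ⟨ha, hb⟩]

theorem exists_joins_of_mem_edgesLeaving {C : Finset G.V} {e : G.BE}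
    (he : e ∈ G.edgesLeaving C) : ∃ a b, G.Joins e a b ∧ a ∈ C ∧ b ∉ C := by
  simp only [edgesLeaving, mem_filter, mem_univ, true_and] at he
  obtain ⟨hs, ht⟩ | ⟨ht, hs⟩ := he
  exacts [⟨_, _, joins_src_tgt e, hs, ht⟩, ⟨_, _, (joins_src_tgt e).symm, ht, hs⟩]

theorem degree_eq_card_edgesLeaving_add (v : G.V) :
    G.degree v = #(G.edgesLeaving {v}) + #(G.leavesAt {v}) := by
  rw [degree, ← card_union_of_disjoint
    (disjoint_filter.2 fun e _ h₁ h₂ => G.src_ne_tgt e (h₁.trans h₂.symm))]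
  congr 2
  · ext e
    have := G.src_ne_tgt e
    simp only [edgesLeaving, mem_union, mem_filter, mem_univ, true_and, mem_singleton]
    grind
  · simp [leavesAt]

theorem card_sdiff_add_card_sdiff_lt_degree {v : G.V} {E' : Finset G.BE} {U' : Finset G.UE}
    {e₀ : G.BE} (he₀ : e₀ ∈ E') (he₀v : G.src e₀ = v ∨ G.tgt e₀ = v) :
    #(G.edgesLeaving {v} \ E') + #(G.leavesAt {v} \ U') < G.degree v := by
  have h₀ : e₀ ∈ G.edgesLeaving {v} ∩ E' := by
    have := G.src_ne_tgt e₀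
    simp only [edgesLeaving, mem_inter, mem_filter, mem_univ, true_and, mem_singleton]
    grind
  have := card_pos.2 ⟨e₀, h₀⟩
  have := card_sdiff_add_card_inter (G.edgesLeaving {v}) E'
  have := card_le_card (sdiff_subset (s := G.leavesAt {v}) (t := U'))
  rw [degree_eq_card_edgesLeaving_add]
  omega

theorem mem_and_mem_edgesLeaving_sdiff {C : Finset G.V} {E' : Finset G.BE} {v₀ : G.V}
    (hint : ∀ w ∈ C, w ≠ v₀ → ∀ e, (G.src e = w ∨ G.tgt e = w) → e ∈ E') {e : G.BE}
    (he : e ∈ G.edgesLeaving C \ E') : v₀ ∈ C ∧ e ∈ G.edgesLeaving {v₀} \ E' := by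
  obtain ⟨he, heE⟩ := mem_sdiff.1 he
  obtain ⟨a, b, hj, ha, hb⟩ := exists_joins_of_mem_edgesLeaving he
  obtain rfl : a = v₀ := by_contra fun h => heE (hint a ha h e hj.src_eq_or_tgt_eq)
  refine ⟨ha, mem_sdiff.2 ⟨mem_edgesLeaving_of_joins hj (mem_singleton_self a) ?_, heE⟩⟩
  exact fun h => hb (mem_singleton.1 h ▸ ha)

theorem mem_and_mem_leavesAt_sdiff {C : Finset G.V} {U' : Finset G.UE} {v₀ : G.V}
    (hint : ∀ w ∈ C, w ≠ v₀ → ∀ u, G.att u = w → u ∈ U') {u : G.UE}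
    (hu : u ∈ G.leavesAt C \ U') : v₀ ∈ C ∧ u ∈ G.leavesAt {v₀} \ U' := by
  simp only [leavesAt, mem_sdiff, mem_filter, mem_univ, true_and, mem_singleton] at hu ⊢
  obtain rfl : G.att u = v₀ := by_contra fun h => hu.2 (hint _ hu.1 h u rfl)
  exact ⟨hu.1, rfl, hu.2⟩

namespace PL

-- The slope of `φ` along `e` in the direction leaving `C`; meaningful for `e ∈ G.edgesLeaving C`.
noncomputable def outSlope (φ : G.PL) (C : Finset G.V) (e : G.BE) : ℝ :=
  if G.src e ∈ C then φ.val (G.tgt e) - φ.val (G.src e) else φ.val (G.src e) - φ.val (G.tgt e)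

theorem outSlope_eq_of_joins {φ : G.PL} {C : Finset G.V} {e : G.BE} {a b : G.V}
    (hj : G.Joins e a b) (ha : a ∈ C) (hb : b ∉ C) : φ.outSlope C e = φ.val b - φ.val a := by
  unfold outSlope
  obtain ⟨rfl, rfl⟩ | ⟨rfl, rfl⟩ := hj
  exacts [if_pos ha, if_neg hb]

theorem slopeSum_sub_degree (φ : G.PL) (v : G.V) :
    φ.slopeSum v - G.degree v =
      ∑ e ∈ univ.filter (fun e => G.src e = v), (φ.val (G.tgt e) - φ.val (G.src e) - 1) +
      ∑ e ∈ univ.filter (fun e => G.tgt e = v), (φ.val (G.src e) - φ.val (G.tgt e) - 1) +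
      ∑ u ∈ univ.filter (fun u => G.att u = v), ((φ.uslope u : ℝ) - 1) := by
  simp only [slopeSum, degree, sum_sub_distrib, sum_const, nsmul_one]
  push_cast
  ring

theorem sum_slopeSum_sub_degree (φ : G.PL) (C : Finset G.V) :
    ∑ v ∈ C, (φ.slopeSum v - G.degree v) =
      ∑ e ∈ G.edgesLeaving C, (φ.outSlope C e - 1) +
      ∑ u ∈ G.leavesAt C, ((φ.uslope u : ℝ) - 1) - 2 * #(G.edgesWithin C) := by
  simp only [slopeSum_sub_degree, sum_add_distrib]
  rw [sum_fiberwise_eq_sum_filter univ C G.src, sum_fiberwise_eq_sum_filter univ C G.tgt,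
    sum_fiberwise_eq_sum_filter univ C G.att]
  simp only [edgesLeaving, leavesAt, edgesWithin, sum_filter, card_filter, Nat.cast_sum, mul_sum]
  rw [add_sub_right_comm, ← sum_add_distrib, ← sum_sub_distrib]
  congr 1
  refine sum_congr rfl fun e _ => ?_
  unfold outSlope
  split_ifs <;> simp_all; ring

theorem sum_outSlope_sub_one_le {φ : G.PL} (hK : φ.CanonicalBound) (C : Finset G.V) :
    ∑ e ∈ G.edgesLeaving C, (φ.outSlope C e - 1) + ∑ u ∈ G.leavesAt C, ((φ.uslope u : ℝ) - 1) ≤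
      2 * ((#(G.edgesWithin C) : ℝ) - #C) := by
  calc _ = ∑ v ∈ C, (φ.slopeSum v - G.degree v) + 2 * #(G.edgesWithin C) := by
        rw [sum_slopeSum_sub_degree]; ring
    _ ≤ ∑ v ∈ C, (-2 : ℝ) + 2 * #(G.edgesWithin C) := by
        gcongr with v; linarith [hK v]
    _ = _ := by rw [sum_const, nsmul_eq_mul]; ring

theorem two_add_sum_le_card_sdiff {φ : G.PL} (hK : φ.CanonicalBound) {C : Finset G.V}
    (hforest : #(G.edgesWithin C) + 1 ≤ #C) {E' : Finset G.BE} {U' : Finset G.UE}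
    (hflat : ∀ e ∉ E', φ.val (G.src e) = φ.val (G.tgt e)) (hflatU : ∀ u ∉ U', φ.uslope u = 0) :
    2 + (∑ e ∈ G.edgesLeaving C ∩ E', (φ.outSlope C e - 1) +
      ∑ u ∈ G.leavesAt C ∩ U', ((φ.uslope u : ℝ) - 1)) ≤
      #(G.edgesLeaving C \ E') + #(G.leavesAt C \ U') := by
  have hE : ∑ e ∈ G.edgesLeaving C, (φ.outSlope C e - 1) =
      ∑ e ∈ G.edgesLeaving C ∩ E', (φ.outSlope C e - 1) - #(G.edgesLeaving C \ E') := by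
    rw [← sum_inter_add_sum_sdiff _ E', card_eq_sum_ones, Nat.cast_sum, sub_eq_add_neg,
      ← sum_neg_distrib]
    congr 1
    refine sum_congr rfl fun e he => ?_
    have := hflat e (mem_sdiff.1 he).2
    unfold outSlope
    split_ifs <;> simp [this]
  have hU : ∑ u ∈ G.leavesAt C, ((φ.uslope u : ℝ) - 1) =
      ∑ u ∈ G.leavesAt C ∩ U', ((φ.uslope u : ℝ) - 1) - #(G.leavesAt C \ U') := by
    rw [← sum_inter_add_sum_sdiff _ U', card_eq_sum_ones, Nat.cast_sum, sub_eq_add_neg,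
      ← sum_neg_distrib]
    congr 1
    exact sum_congr rfl fun u hu => by simp [hflatU u (mem_sdiff.1 hu).2]
  have hsum := sum_outSlope_sub_one_le hK C
  have hforest' : ((#(G.edgesWithin C) : ℕ) : ℝ) + 1 ≤ #C := by exact_mod_cast hforest
  linarith

theorem mem_and_outSlope_eq_one {φ : G.PL} (hK : φ.CanonicalBound) {C : Finset G.V}
    (hforest : #(G.edgesWithin C) + 1 ≤ #C) {E' : Finset G.BE} {U' : Finset G.UE} {v₀ : G.V}
    (hint : ∀ w ∈ C, w ≠ v₀ →
      (∀ e, (G.src e = w ∨ G.tgt e = w) → e ∈ E') ∧ ∀ u, G.att u = w → u ∈ U')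
    (hflat : ∀ e ∉ E', φ.val (G.src e) = φ.val (G.tgt e)) (hflatU : ∀ u ∉ U', φ.uslope u = 0)
    (hrise : ∀ e ∈ G.edgesLeaving C ∩ E', 1 ≤ φ.outSlope C e)
    (hriseU : ∀ u ∈ U', 1 ≤ φ.uslope u)
    (hv₀ : #(G.edgesLeaving {v₀} \ E') + #(G.leavesAt {v₀} \ U') ≤ 2) :
    v₀ ∈ C ∧ ∀ e ∈ G.edgesLeaving C ∩ E', φ.outSlope C e = 1 := by
  have hexit e (he : e ∈ G.edgesLeaving C \ E') :=
    mem_and_mem_edgesLeaving_sdiff (fun w hw hne => (hint w hw hne).1) he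
  have hexitU u (hu : u ∈ G.leavesAt C \ U') :=
    mem_and_mem_leavesAt_sdiff (fun w hw hne => (hint w hw hne).2) hu
  have hrise' : ∀ e ∈ G.edgesLeaving C ∩ E', 0 ≤ φ.outSlope C e - 1 :=
    fun e he => sub_nonneg.2 (hrise e he)
  have hriseU' : ∀ u ∈ G.leavesAt C ∩ U', 0 ≤ (φ.uslope u : ℝ) - 1 :=
    fun u hu => sub_nonneg.2 (by exact_mod_cast hriseU u (mem_inter.1 hu).2)
  have hkey := two_add_sum_le_card_sdiff hK hforest hflat hflatU
  have hU₀ := sum_nonneg hriseU'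
  have hv₀C : v₀ ∈ C := by
    by_contra hv₀C
    rw [eq_empty_of_forall_notMem fun e he => hv₀C (hexit e he).1,
      eq_empty_of_forall_notMem fun u hu => hv₀C (hexitU u hu).1] at hkey
    have := sum_nonneg hrise'
    simp only [card_empty, Nat.cast_zero] at hkey
    linarith
  have hN : ((#(G.edgesLeaving C \ E') : ℕ) : ℝ) + #(G.leavesAt C \ U') ≤ 2 := by
    exact_mod_cast (add_le_add (card_le_card fun e he => (hexit e he).2)
      (card_le_card fun u hu => (hexitU u hu).2)).trans hv₀
  refine ⟨hv₀C, fun e he => le_antisymm ?_ (hrise e he)⟩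
  have := single_le_sum hrise' he
  linarith

noncomputable def edgesBelow (φ : G.PL) (E : Finset G.BE) (m : ℝ) : Finset G.BE :=
  E.filter fun e => φ.val (G.src e) < m ∧ φ.val (G.tgt e) < m

@[simp]
theorem mem_edgesBelow {φ : G.PL} {E : Finset G.BE} {m : ℝ} {e : G.BE} :
    e ∈ φ.edgesBelow E m ↔ e ∈ E ∧ φ.val (G.src e) < m ∧ φ.val (G.tgt e) < m := by
  simp [edgesBelow]

theorem one_le_sub_of_lt (φ : G.PL) {e : G.BE} {a b : G.V} (hj : G.Joins e a b)
    (h : φ.val a < φ.val b) : 1 ≤ φ.val b - φ.val a := by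
  obtain ⟨k, hk⟩ : ∃ k : ℤ, φ.val b - φ.val a = k := by
    obtain ⟨k, hk⟩ := φ.int_slope e
    obtain ⟨rfl, rfl⟩ | ⟨rfl, rfl⟩ := hj
    exacts [⟨k, hk⟩, ⟨-k, by push_cast; linarith⟩]
  have hk₀ : 0 < k := by exact_mod_cast hk ▸ sub_pos.2 h
  rw [hk]
  exact_mod_cast hk₀

theorem reflTransGen_and_sub_eq_one_of_lt {φ : G.PL} {P' : Finset G.V} {E' : Finset G.BE}
    {U' : Finset G.UE} {v₀ : G.V} {m : ℝ}
    (hE' : ∀ e ∈ E', G.src e ∈ P' ∧ G.tgt e ∈ P')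
    (hint : ∀ w ∈ P', w ≠ v₀ →
      (∀ e, (G.src e = w ∨ G.tgt e = w) → e ∈ E') ∧ ∀ u, G.att u = w → u ∈ U')
    (hv₀ : #(G.edgesLeaving {v₀} \ E') + #(G.leavesAt {v₀} \ U') ≤ 2)
    (hK : φ.CanonicalBound) (hflat : ∀ e ∉ E', φ.val (G.src e) = φ.val (G.tgt e))
    (hflatU : ∀ u ∉ U', φ.uslope u = 0) (hriseU : ∀ u ∈ U', 1 ≤ φ.uslope u)
    (hcyc : ∀ P₂ E₂, G.IsCycle P₂ E₂ → E₂ ⊆ E' → ∀ x ∈ P₂, m ≤ φ.val x)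
    {x : G.V} (hxP : x ∈ P') (hx : φ.val x < m) :
    ReflTransGen (G.Adj (φ.edgesBelow E' m)) x v₀ ∧
      ∀ e ∈ E', ∀ b, G.Joins e x b → m ≤ φ.val b → φ.val b - φ.val x = 1 := by
  set C := G.reachSet (φ.edgesBelow E' m) x
  have hlow : ∀ v ∈ C, v ∈ P' ∧ φ.val v < m :=
    forall_mem_reachSet (p := fun v => v ∈ P' ∧ φ.val v < m) ⟨hxP, hx⟩ fun e he => by
      obtain ⟨heE, hs, ht⟩ := mem_edgesBelow.1 he
      exact ⟨⟨(hE' e heE).1, hs⟩, (hE' e heE).2, ht⟩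
  have hwithin : G.edgesWithin C ⊆ E' := fun e he => by
    obtain ⟨hs, ht⟩ := mem_edgesWithin.1 he
    by_contra heE
    have h₁ : G.src e = v₀ := by_contra fun h => heE ((hint _ (hlow _ hs).1 h).1 e (Or.inl rfl))
    have h₂ : G.tgt e = v₀ := by_contra fun h => heE ((hint _ (hlow _ ht).1 h).1 e (Or.inr rfl))
    exact G.src_ne_tgt e (h₁.trans h₂.symm)
  have hforest : #(G.edgesWithin C) + 1 ≤ #C := by
    refine card_edgesWithin_reachSet_add_one_le fun P₂ E₂ hc hsub => ?_
    obtain ⟨y, hy⟩ := hc.nonempty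
    obtain ⟨e, he, hye⟩ := hc.exists_incident hy
    have hyC : y ∈ C := by
      obtain ⟨hs, ht⟩ := mem_edgesWithin.1 (hsub he)
      rcases hye with rfl | rfl <;> assumption
    exact (hlow y hyC).2.not_ge (hcyc P₂ E₂ hc (hsub.trans hwithin) y hy)
  have hclosed : ∀ e ∈ E', ∀ a b, G.Joins e a b → a ∈ C → b ∉ C → m ≤ φ.val b :=
    fun e heE a b hj ha hb => not_lt.1 fun hbm => hb <| mem_reachSet_of_joins
      (mem_edgesBelow.2 ⟨heE, hj.src_tgt_of (p := (φ.val · < m)) (hlow a ha).2 hbm⟩) hj ha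
  have hrise : ∀ e ∈ G.edgesLeaving C ∩ E', 1 ≤ φ.outSlope C e := by
    intro e he
    obtain ⟨he, heE⟩ := mem_inter.1 he
    obtain ⟨a, b, hj, ha, hb⟩ := exists_joins_of_mem_edgesLeaving he
    rw [outSlope_eq_of_joins hj ha hb]
    exact φ.one_le_sub_of_lt hj ((hlow a ha).2.trans_le (hclosed e heE a b hj ha hb))
  obtain ⟨hv₀C, hone⟩ := mem_and_outSlope_eq_one hK hforest (fun w hw => hint w (hlow w hw).1)
    hflat hflatU hrise hriseU hv₀
  refine ⟨mem_reachSet.1 hv₀C, fun e heE b hj hb => ?_⟩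
  have hxC : x ∈ C := mem_reachSet.2 .refl
  have hbC : b ∉ C := fun hbC => (hlow b hbC).2.not_ge hb
  rw [← outSlope_eq_of_joins hj hxC hbC,
    hone e (mem_inter.2 ⟨mem_edgesLeaving_of_joins hj hxC hbC, heE⟩)]

theorem eq_of_joins_of_reflTransGen {φ : G.PL} {E' EΓ : Finset G.BE} {m : ℝ}
    (hcyc : ∀ P₂ E₂, G.IsCycle P₂ E₂ → E₂ ⊆ E' → ∀ x ∈ P₂, m ≤ φ.val x) (hEΓ : EΓ ⊆ E')
    {e f : G.BE} {w x y z : G.V} (he : e ∈ E' \ EΓ) (hf : f ∈ E') (hje : G.Joins e w x)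
    (hjf : G.Joins f y z) (hw : m ≤ φ.val w) (hx : φ.val x < m)
    (hxy : ReflTransGen (G.Adj (φ.edgesBelow E' m)) x y)
    (hzw : ReflTransGen (G.Adj EΓ) z w) : e = f := by
  by_contra hne
  set E₃ := insert f (φ.edgesBelow E' m ∪ EΓ)
  have hxw : ReflTransGen (G.Adj E₃) x w :=
    ((reflTransGen_adj_mono (subset_union_left.trans (subset_insert _ _)) hxy).tail
      ⟨f, mem_insert_self _ _, hjf⟩).trans
      (reflTransGen_adj_mono (subset_union_right.trans (subset_insert _ _)) hzw)
  have heE₃ : e ∉ E₃ := by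
    simp only [E₃, mem_insert, mem_union, mem_edgesBelow, not_or]
    refine ⟨hne, fun ⟨_, hlow⟩ => hw.not_gt ?_, (mem_sdiff.1 he).2⟩
    exact (hje.of_src_tgt (p := (φ.val · < m)) hlow.1 hlow.2).1
  obtain ⟨P₂, E₂, hc, hsub, hxP₂⟩ := exists_isCycle_of_joins hje.symm heE₃ hxw
  refine hx.not_ge (hcyc P₂ E₂ hc (hsub.trans ?_) x hxP₂)
  refine insert_subset (mem_sdiff.1 he).1 (insert_subset hf (union_subset ?_ hEΓ))
  exact fun e he => (mem_edgesBelow.1 he).1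

theorem sum_descents_le_one (φ : G.PL) (S : Finset G.V) (E' EΓ : Finset G.BE)
    (hslope : ∀ e ∈ E' \ EΓ, ∀ w x, G.Joins e w x → w ∈ S → φ.val x < φ.val w →
      φ.val w - φ.val x = 1)
    (huniq : ∀ e ∈ E' \ EΓ, ∀ f ∈ E' \ EΓ, ∀ w x z y, G.Joins e w x → G.Joins f z y →
      w ∈ S → z ∈ S → φ.val x < φ.val w → φ.val y < φ.val z → e = f) :
    ∑ w ∈ S, ((∑ e ∈ E'.filter (fun e => e ∉ EΓ ∧ G.src e = w ∧
        φ.val (G.tgt e) - φ.val (G.src e) < 0), (φ.val (G.src e) - φ.val (G.tgt e))) +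
      ∑ e ∈ E'.filter (fun e => e ∉ EΓ ∧ G.tgt e = w ∧
        φ.val (G.src e) - φ.val (G.tgt e) < 0), (φ.val (G.tgt e) - φ.val (G.src e))) ≤ 1 := by
  rw [sum_add_distrib, sum_sum_filter_and_eq, sum_sum_filter_and_eq]
  set D₁ := E'.filter fun e => e ∉ EΓ ∧ G.src e ∈ S ∧ φ.val (G.tgt e) - φ.val (G.src e) < 0
  set D₂ := E'.filter fun e => e ∉ EΓ ∧ G.tgt e ∈ S ∧ φ.val (G.src e) - φ.val (G.tgt e) < 0
  have hD : ∀ e ∈ D₁ ∪ D₂, ∃ w x, e ∈ E' \ EΓ ∧ G.Joins e w x ∧ w ∈ S ∧ φ.val x < φ.val w := by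
    intro e he
    rcases mem_union.1 he with he | he <;> obtain ⟨heE, heΓ, hS, hlt⟩ := mem_filter.1 he
    · exact ⟨_, _, mem_sdiff.2 ⟨heE, heΓ⟩, joins_src_tgt e, hS, by linarith⟩
    · exact ⟨_, _, mem_sdiff.2 ⟨heE, heΓ⟩, (joins_src_tgt e).symm, hS, by linarith⟩
  have hcard : #(D₁ ∪ D₂) ≤ 1 := card_le_one.2 fun e he f hf => by
    obtain ⟨w, x, he', hj, hw, hx⟩ := hD e he
    obtain ⟨z, y, hf', hjf, hz, hy⟩ := hD f hf
    exact huniq e he' f hf' w x z y hj hjf hw hz hx hy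
  have hdisj : Disjoint D₁ D₂ :=
    disjoint_filter.2 fun e _ h₁ h₂ => by linarith [h₁.2.2, h₂.2.2]
  calc _ = ∑ e ∈ D₁, (1 : ℝ) + ∑ e ∈ D₂, (1 : ℝ) := by
        congr 1 <;> refine sum_congr rfl fun e he => ?_ <;>
          obtain ⟨heE, heΓ, hS, hlt⟩ := mem_filter.1 he
        · exact hslope e (mem_sdiff.2 ⟨heE, heΓ⟩) _ _ (joins_src_tgt e) hS (by linarith)
        · exact hslope e (mem_sdiff.2 ⟨heE, heΓ⟩) _ _ (joins_src_tgt e).symm hS (by linarith)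
    _ = #(D₁ ∪ D₂) := by rw [card_union_of_disjoint hdisj]; simp
    _ ≤ 1 := by exact_mod_cast hcard

end PL

end TropGraph

open TropGraph in
theorem weak_wellspacedness_degree_le_one_general
    {n : ℕ} (G : TropGraph n) (φ : TropGraph.PL G)
    (P' : Finset G.V) (E' : Finset G.BE) (U' : Finset G.UE)
    (v₀ : G.V) (e₀ : G.BE)
    (PΓ : Finset G.V) (EΓ : Finset G.BE) (hΓne : PΓ.Nonempty)
    -- Γ' = (P', E', U') is a subgraph of Σ
    (hE' : ∀ e ∈ E', G.src e ∈ P' ∧ G.tgt e ∈ P')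
    -- ∂Γ' = {v₀} and v₀ is trivalent in Σ
    (hv₀deg : G.degree v₀ = 3)
    -- exactly one edge e₀ of v₀ lies in Γ'
    (he₀ : e₀ ∈ E') (he₀v : G.src e₀ = v₀ ∨ G.tgt e₀ = v₀)
    -- every edge of Σ incident to a vertex of Γ'∖{v₀} lies in Γ'
    (hint : ∀ w ∈ P', w ≠ v₀ →
      (∀ e : G.BE, (G.src e = w ∨ G.tgt e = w) → e ∈ E') ∧
      ∀ u : G.UE, G.att u = w → u ∈ U')
    -- φ is nonnegative with Δ(φ) + K_Σ ≥ 0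
    (hnn : φ.Nonneg) (hK : φ.CanonicalBound)
    -- φ vanishes identically on every edge of Σ not in Γ'
    (hvan1 : ∀ e : G.BE, e ∉ E' → φ.val (G.src e) = 0 ∧ φ.val (G.tgt e) = 0)
    (hvan2 : ∀ u : G.UE, u ∉ U' → φ.val (G.att u) = 0 ∧ φ.uslope u = 0)
    -- the slope of φ is nonzero on every edge of Γ'
    (hnz2 : ∀ u ∈ U', φ.uslope u ≠ 0)
    -- Γ = (PΓ, EΓ) is a cycle contained in Γ'
    (hEΓsub : EΓ ⊆ E')
    (hΓconn : ∀ a ∈ PΓ, ∀ b ∈ PΓ, Relation.ReflTransGen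
      (fun a b => ∃ e ∈ EΓ, (G.src e = a ∧ G.tgt e = b) ∨ (G.src e = b ∧ G.tgt e = a)) a b)
    -- Γ minimizes h_Γ = min_{v' ∈ Γ} φ(v') among all cycles contained in Γ'
    (hmin : ∀ (P₂ : Finset G.V) (E₂ : Finset G.BE) (hne₂ : P₂.Nonempty),
      (∀ w ∈ P₂, w ∈ P') → E₂ ⊆ E' → (∀ e ∈ E₂, G.src e ∈ P₂ ∧ G.tgt e ∈ P₂) →
      (∀ a ∈ P₂, ∀ b ∈ P₂, Relation.ReflTransGen
        (fun a b => ∃ e ∈ E₂, (G.src e = a ∧ G.tgt e = b) ∨ (G.src e = b ∧ G.tgt e = a)) a b) →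
      (∀ w ∈ P₂, (E₂.filter (fun e => G.src e = w)).card +
        (E₂.filter (fun e => G.tgt e = w)).card = 2) →
      PΓ.inf' hΓne φ.val ≤ P₂.inf' hne₂ φ.val) :
    -- conclusion: deg(D_φ) ≤ 1
    (∑ w ∈ PΓ.filter (fun w => φ.val w = PΓ.inf' hΓne φ.val),
      ((∑ e ∈ E'.filter (fun e => e ∉ EΓ ∧ G.src e = w ∧
          φ.val (G.tgt e) - φ.val (G.src e) < 0),
          (φ.val (G.src e) - φ.val (G.tgt e))) +
        (∑ e ∈ E'.filter (fun e => e ∉ EΓ ∧ G.tgt e = w ∧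
          φ.val (G.src e) - φ.val (G.tgt e) < 0),
          (φ.val (G.tgt e) - φ.val (G.src e))) +
        ∑ u ∈ U'.filter (fun u => G.att u = w ∧ φ.uslope u < 0), (-(φ.uslope u) : ℝ)))
      ≤ 1 := by
  set m := PΓ.inf' hΓne φ.val
  have hcyc : ∀ P₂ E₂, G.IsCycle P₂ E₂ → E₂ ⊆ E' → ∀ x ∈ P₂, m ≤ φ.val x :=
    fun P₂ E₂ hc hsub x hx => (hmin P₂ E₂ hc.nonempty (hc.subset fun e he => hE' e (hsub he)) hsub
      hc.endpoints_mem hc.connected hc.incidence_eq_two).trans (Finset.inf'_le _ hx)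
  have hv₀ : (G.edgesLeaving {v₀} \ E').card + (G.leavesAt {v₀} \ U').card ≤ 2 := by
    have := card_sdiff_add_card_sdiff_lt_degree (U' := U') he₀ he₀v
    omega
  have hriseU : ∀ u ∈ U', 1 ≤ φ.uslope u := fun u hu => by
    have := hnn.2 u; have := hnz2 u hu; omega
  have hcomp := fun x (hxP : x ∈ P') (hx : φ.val x < m) =>
    PL.reflTransGen_and_sub_eq_one_of_lt hE' hint hv₀ hK
      (fun e he => (hvan1 e he).1.trans (hvan1 e he).2.symm) (fun u hu => (hvan2 u hu).2)
      hriseU hcyc hxP hx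
  have hP : ∀ e ∈ E', ∀ a b, G.Joins e a b → b ∈ P' :=
    fun e he a b hj => (hj.of_src_tgt (hE' e he).1 (hE' e he).2).2
  rw [Finset.sum_add_distrib, Finset.sum_eq_zero fun w _ => Finset.sum_eq_zero fun u hu =>
    absurd (Finset.mem_filter.1 hu).2.2 (not_lt.2 (hnn.2 u)), add_zero]
  refine PL.sum_descents_le_one φ _ E' EΓ (fun e he w x hj hw hx => ?_)
    (fun e he f hf w x z y hje hjf hw hz hx hy => ?_)
  · obtain ⟨-, hwm⟩ := Finset.mem_filter.1 hw
    exact (hcomp x (hP e (Finset.mem_sdiff.1 he).1 _ _ hj) (hwm ▸ hx)).2 e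
      (Finset.mem_sdiff.1 he).1 w hj.symm hwm.ge
  · obtain ⟨hwΓ, hwm⟩ := Finset.mem_filter.1 hw
    obtain ⟨hzΓ, hzm⟩ := Finset.mem_filter.1 hz
    have hx₀ := (hcomp x (hP e (Finset.mem_sdiff.1 he).1 _ _ hje) (hwm ▸ hx)).1
    have hy₀ := (hcomp y (hP f (Finset.mem_sdiff.1 hf).1 _ _ hjf) (hzm ▸ hy)).1
    exact PL.eq_of_joins_of_reflTransGen hcyc hEΓsub he (Finset.mem_sdiff.1 hf).1 hje hjf.symm
      hwm.ge (hwm ▸ hx) (hx₀.trans (reflTransGen_adj_symm hy₀)) (hΓconn z hzΓ w hwΓ)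

open TropGraph in
/-- Combinatorial core of the weak well-spacedness theorem: let `Γ' ⊆ Σ`
be a subgraph containing a cycle (`h¹(Γ') > 0`, i.e. `#V(Γ') < #E(Γ') + #components`)
whose boundary `∂Γ'` consists of a single vertex `v₀` of degree 3 in `Σ`, with exactly
one edge `e₀` of `v₀` lying in `Γ'`, and such that every edge of `Σ` incident to a
vertex of `Γ'∖{v₀}` lies in `Γ'`.  Let `φ` be a nonnegative piecewise-linear function
with integer slopes on `Σ` with `Δ(φ) + K_Σ ≥ 0`, vanishing identically on every edge
not in `Γ'` and with nonzero slope on every edge of `Γ'`.  If `Γ` is a cycle in `Γ'`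
minimizing `h_Γ = min_{v' ∈ Γ} φ(v')`, then `deg(D_φ) ≤ 1`. -/
theorem weak_wellspacedness_degree_le_one
    {n : ℕ} (G : TropGraph n) (φ : TropGraph.PL G)
    (P' : Finset G.V) (E' : Finset G.BE) (U' : Finset G.UE)
    (v₀ : G.V) (e₀ : G.BE)
    (PΓ : Finset G.V) (EΓ : Finset G.BE) (hΓne : PΓ.Nonempty)
    -- Γ' = (P', E', U') is a subgraph of Σ
    (hE' : ∀ e ∈ E', G.src e ∈ P' ∧ G.tgt e ∈ P')
    (hU' : ∀ u ∈ U', G.att u ∈ P')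
    -- h¹(Γ') > 0: more (bounded) edges than vertices minus components
    (hcyc : P'.card < E'.card + compCount (fun a b : {w : G.V // w ∈ P'} =>
      ∃ e ∈ E', (G.src e = a.1 ∧ G.tgt e = b.1) ∨ (G.src e = b.1 ∧ G.tgt e = a.1)))
    -- ∂Γ' = {v₀} and v₀ is trivalent in Σ
    (hB' : ∀ w : G.V, (w ∈ P' ∧
      ((∃ e : G.BE, e ∉ E' ∧ (G.src e = w ∨ G.tgt e = w)) ∨
        ∃ u : G.UE, u ∉ U' ∧ G.att u = w)) ↔ w = v₀)
    (hv₀deg : G.degree v₀ = 3)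
    -- exactly one edge e₀ of v₀ lies in Γ'
    (he₀ : e₀ ∈ E') (he₀v : G.src e₀ = v₀ ∨ G.tgt e₀ = v₀)
    (he₀uniq : ∀ e ∈ E', (G.src e = v₀ ∨ G.tgt e = v₀) → e = e₀)
    (hnoU : ∀ u ∈ U', G.att u ≠ v₀)
    -- every edge of Σ incident to a vertex of Γ'∖{v₀} lies in Γ'
    (hint : ∀ w ∈ P', w ≠ v₀ →
      (∀ e : G.BE, (G.src e = w ∨ G.tgt e = w) → e ∈ E') ∧
      ∀ u : G.UE, G.att u = w → u ∈ U')
    -- φ is nonnegative with Δ(φ) + K_Σ ≥ 0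
    (hnn : φ.Nonneg) (hK : φ.CanonicalBound)
    -- φ vanishes identically on every edge of Σ not in Γ'
    (hvan1 : ∀ e : G.BE, e ∉ E' → φ.val (G.src e) = 0 ∧ φ.val (G.tgt e) = 0)
    (hvan2 : ∀ u : G.UE, u ∉ U' → φ.val (G.att u) = 0 ∧ φ.uslope u = 0)
    -- the slope of φ is nonzero on every edge of Γ'
    (hnz1 : ∀ e ∈ E', φ.val (G.src e) ≠ φ.val (G.tgt e))
    (hnz2 : ∀ u ∈ U', φ.uslope u ≠ 0)
    -- Γ = (PΓ, EΓ) is a cycle contained in Γ'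
    (hPΓ : ∀ w ∈ PΓ, w ∈ P') (hEΓsub : EΓ ⊆ E')
    (hEΓ : ∀ e ∈ EΓ, G.src e ∈ PΓ ∧ G.tgt e ∈ PΓ)
    (hΓconn : ∀ a ∈ PΓ, ∀ b ∈ PΓ, Relation.ReflTransGen
      (fun a b => ∃ e ∈ EΓ, (G.src e = a ∧ G.tgt e = b) ∨ (G.src e = b ∧ G.tgt e = a)) a b)
    (hΓdeg2 : ∀ w ∈ PΓ,
      (EΓ.filter (fun e => G.src e = w)).card + (EΓ.filter (fun e => G.tgt e = w)).card = 2)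
    -- Γ minimizes h_Γ = min_{v' ∈ Γ} φ(v') among all cycles contained in Γ'
    (hmin : ∀ (P₂ : Finset G.V) (E₂ : Finset G.BE) (hne₂ : P₂.Nonempty),
      (∀ w ∈ P₂, w ∈ P') → E₂ ⊆ E' → (∀ e ∈ E₂, G.src e ∈ P₂ ∧ G.tgt e ∈ P₂) →
      (∀ a ∈ P₂, ∀ b ∈ P₂, Relation.ReflTransGen
        (fun a b => ∃ e ∈ E₂, (G.src e = a ∧ G.tgt e = b) ∨ (G.src e = b ∧ G.tgt e = a)) a b) →
      (∀ w ∈ P₂, (E₂.filter (fun e => G.src e = w)).card +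
        (E₂.filter (fun e => G.tgt e = w)).card = 2) →
      PΓ.inf' hΓne φ.val ≤ P₂.inf' hne₂ φ.val) :
    -- conclusion: deg(D_φ) ≤ 1
    (∑ w ∈ PΓ.filter (fun w => φ.val w = PΓ.inf' hΓne φ.val),
      ((∑ e ∈ E'.filter (fun e => e ∉ EΓ ∧ G.src e = w ∧
          φ.val (G.tgt e) - φ.val (G.src e) < 0),
          (φ.val (G.src e) - φ.val (G.tgt e))) +
        (∑ e ∈ E'.filter (fun e => e ∉ EΓ ∧ G.tgt e = w ∧
          φ.val (G.src e) - φ.val (G.tgt e) < 0),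
          (φ.val (G.tgt e) - φ.val (G.src e))) +
        ∑ u ∈ U'.filter (fun u => G.att u = w ∧ φ.uslope u < 0), (-(φ.uslope u) : ℝ)))
      ≤ 1 :=
  weak_wellspacedness_degree_le_one_general G φ P' E' U' v₀ e₀ PΓ EΓ hΓne hE' hv₀deg he₀ he₀v hint
    hnn hK hvan1 hvan2 hnz2 hEΓsub hΓconn hmin
end

section
/- (Tree case.) Suppose Γ is a tree, so that the nodal curve (C_Γ)₀ has arithmetic genus 0. Then φ is C₀-ample on Γ in Γ' if and only if deg(D_φ|_{ℙ¹_v}) ≥ 1 for every vertex v of Γ with φ(v) = h. -/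
attribute [local instance] Classical.propDecidable

/-- The order of vanishing of a rational function `f` on `ℙ¹ = ℂ ∪ {∞}`
(modeled as `Option ℂ`, with `none` the point at infinity) at a point `q`;
negative at poles.  (For `f = 0` this gives the junk value `0`, i.e. `div 0 = 0`.) -/
noncomputable def ordAt (f : RatFunc ℂ) : Option ℂ → ℤ
  | Option.none => (f.denom.natDegree : ℤ) - (f.num.natDegree : ℤ)
  | Option.some a => (f.num.rootMultiplicity a : ℤ) - (f.denom.rootMultiplicity a : ℤ)

/-- The value of a rational function `f` on `ℙ¹ = ℂ ∪ {∞}` at a point `q`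
(junk value where `f` is not regular). -/
noncomputable def evalAt (f : RatFunc ℂ) : Option ℂ → ℂ
  | Option.none => if f.num.natDegree = f.denom.natDegree then
      f.num.leadingCoeff / f.denom.leadingCoeff else 0
  | Option.some a => RatFunc.eval (RingHom.id ℂ) a f

namespace TropGraph

/-- The coefficient at the point `q` of the component `ℙ¹_v` of the divisor `D_φ`:
`D_φ = Σ_{v, φ(v) = h} Σ_{e ∈ E_v^∂, s_φ(v,e) < 0} (−s_φ(v,e))·(p_e^v)`, where
`E_v^∂` is the set of edges of `Γ'` not in `Γ` incident to `v`, and `p_e^v` is the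
boundary point `pS e`/`pT e`/`pU e` of `ℙ¹_v` assigned to the endpoint `v` of `e`. -/
noncomputable def Dcoef {n : ℕ} (G : TropGraph n) (φ : PL G)
    (E' : Finset G.BE) (U' : Finset G.UE) (EΓ : Finset G.BE)
    (pS pT : G.BE → Option ℂ) (pU : G.UE → Option ℂ) (h : ℝ)
    (v : G.V) (q : Option ℂ) : ℝ :=
  if φ.val v = h then
    (∑ e ∈ E'.filter (fun e => e ∉ EΓ ∧ G.src e = v ∧
        φ.val (G.tgt e) - φ.val (G.src e) < 0 ∧ pS e = q),
        (φ.val (G.src e) - φ.val (G.tgt e))) +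
      (∑ e ∈ E'.filter (fun e => e ∉ EΓ ∧ G.tgt e = v ∧
        φ.val (G.src e) - φ.val (G.tgt e) < 0 ∧ pT e = q),
        (φ.val (G.tgt e) - φ.val (G.src e))) +
      ∑ u ∈ U'.filter (fun u => G.att u = v ∧ φ.uslope u < 0 ∧ pU u = q),
        (-(φ.uslope u) : ℝ)
  else 0

/-- The degree of the part `D_φ|_{ℙ¹_v}` of the divisor `D_φ` supported on the
component `ℙ¹_v`. -/
noncomputable def DdegAt {n : ℕ} (G : TropGraph n) (φ : PL G)
    (E' : Finset G.BE) (U' : Finset G.UE) (EΓ : Finset G.BE) (h : ℝ) (v : G.V) : ℝ :=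
  if φ.val v = h then
    (∑ e ∈ E'.filter (fun e => e ∉ EΓ ∧ G.src e = v ∧
        φ.val (G.tgt e) - φ.val (G.src e) < 0),
        (φ.val (G.src e) - φ.val (G.tgt e))) +
      (∑ e ∈ E'.filter (fun e => e ∉ EΓ ∧ G.tgt e = v ∧
        φ.val (G.src e) - φ.val (G.tgt e) < 0),
        (φ.val (G.tgt e) - φ.val (G.src e))) +
      ∑ u ∈ U'.filter (fun u => G.att u = v ∧ φ.uslope u < 0), (-(φ.uslope u) : ℝ)
  else 0

/-- The total degree `deg(D_φ)` of the divisor `D_φ`. -/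
noncomputable def Ddeg {n : ℕ} (G : TropGraph n) (φ : PL G) (PΓ : Finset G.V)
    (E' : Finset G.BE) (U' : Finset G.UE) (EΓ : Finset G.BE) (h : ℝ) : ℝ :=
  ∑ v ∈ PΓ, DdegAt G φ E' U' EΓ h v

/-- `φ` is `C₀`-ample on `Γ` in `Γ'`: there is a family `(f_v)_{v ∈ V(Γ)}` of rational
functions on the components `ℙ¹_v` of the nodal curve `(C_Γ)₀` with
`div(f_v) + D_φ|_{ℙ¹_v} ≥ 0` (in particular each `f_v` is regular at the node points),
matching at the nodes (`f_v(p_e^v) = f_w(p_e^w)` for every edge `e = vw` of `Γ`), and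
with `f_v` nonconstant precisely for the vertices `v` with `φ(v) = h`. -/
noncomputable def C0Ample {n : ℕ} (G : TropGraph n) (φ : PL G)
    (PΓ : Finset G.V) (E' : Finset G.BE) (U' : Finset G.UE) (EΓ : Finset G.BE)
    (pS pT : G.BE → Option ℂ) (pU : G.UE → Option ℂ) (h : ℝ) : Prop :=
  ∃ f : G.V → RatFunc ℂ,
    (∀ v ∈ PΓ, ∀ q : Option ℂ,
      0 ≤ Dcoef G φ E' U' EΓ pS pT pU h v q + (ordAt (f v) q : ℝ)) ∧
    (∀ e ∈ EΓ, evalAt (f (G.src e)) (pS e) = evalAt (f (G.tgt e)) (pT e)) ∧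
    ∀ v ∈ PΓ, ((¬ ∃ c : ℂ, f v = RatFunc.C c) ↔ φ.val v = h)

end TropGraph


/-!
A nonconstant `f_v` has a pole, and `div(f_v) + D_φ ≥ 0` puts it in the support of
`D_φ|_{ℙ¹_v}`; hence the degree condition is necessary. Conversely, the coefficients of `D_φ` are
integers and its support avoids the node points, so on a component with `φ(v) = h` a function
with one simple pole at a point of `D_φ|_{ℙ¹_v}` can take any prescribed value at a given node,
and elsewhere a constant can. Since `Γ` is a tree these local choices glue: solve the problem on
`Γ` minus a leaf and then match the value at the leaf's unique node.
-/

section ProjectiveLine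

open Polynomial

lemma ordAt_C (c : ℂ) (q : Option ℂ) : ordAt (RatFunc.C c) q = 0 := by
  cases q with
  | none => simp [ordAt, RatFunc.num_C, RatFunc.denom_C]
  | some a =>
    rcases eq_or_ne c 0 with rfl | hc
    · simp [ordAt]
    · simp [ordAt, rootMultiplicity_eq_zero, IsRoot, hc]

lemma evalAt_C (c : ℂ) (q : Option ℂ) : evalAt (RatFunc.C c) q = c := by
  cases q <;> simp [evalAt, RatFunc.num_C, RatFunc.denom_C, RatFunc.eval_C]

lemma not_exists_C_eq_of_ordAt_ne_zero {f : RatFunc ℂ} {q : Option ℂ} (h : ordAt f q ≠ 0) :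
    ¬∃ c : ℂ, f = RatFunc.C c := by
  rintro ⟨c, rfl⟩
  exact h (ordAt_C c q)

lemma exists_ordAt_neg_of_not_exists_C_eq {f : RatFunc ℂ} (h : ¬∃ c : ℂ, f = RatFunc.C c) :
    ∃ q : Option ℂ, ordAt f q < 0 := by
  rcases Nat.eq_zero_or_pos f.denom.natDegree with hd | hd
  · have hden : f.denom = 1 := (RatFunc.monic_denom f).natDegree_eq_zero.mp hd
    have hnum : f.num.natDegree ≠ 0 := fun h0 => h ⟨f.num.coeff 0, by
      rw [← RatFunc.num_div_denom f, hden, eq_C_of_natDegree_eq_zero h0]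
      simp [RatFunc.algebraMap_C]⟩
    exact ⟨none, by simp only [ordAt, hden, natDegree_one]; omega⟩
  · obtain ⟨a, ha⟩ := Complex.exists_root (natDegree_pos_iff_degree_pos.mp hd)
    have hnum : f.num.rootMultiplicity a = 0 := by
      refine rootMultiplicity_eq_zero fun hroot => ?_
      rcases aeval_ne_zero_of_isCoprime (RatFunc.isCoprime_num_denom f) a with h' | h' <;>
        simp_all [IsRoot]
    have hden := (rootMultiplicity_pos (RatFunc.denom_ne_zero f)).mpr ha
    exact ⟨some a, by simp only [ordAt, hnum]; omega⟩

lemma RatFunc.num_denom_div_of_isCoprime {K : Type*} [Field K] {P Q : K[X]} (hQ : Q.Monic)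
    (hPQ : IsCoprime P Q) :
    (algebraMap K[X] (RatFunc K) P / algebraMap _ _ Q).num = P ∧
      (algebraMap K[X] (RatFunc K) P / algebraMap _ _ Q).denom = Q := by
  set x := algebraMap K[X] (RatFunc K) P / algebraMap _ _ Q
  have key : x.num * Q = P * x.denom := (RatFunc.num_mul_eq_mul_denom_iff hQ.ne_zero).mpr rfl
  have hden : x.denom = Q := by
    refine eq_of_monic_of_associated (RatFunc.monic_denom x) hQ (associated_of_dvd_dvd ?_ ?_)
    · exact (RatFunc.isCoprime_num_denom x).symm.dvd_of_dvd_mul_left ⟨P, by rw [key, mul_comm]⟩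
    · exact hPQ.symm.dvd_of_dvd_mul_left ⟨x.num, by rw [← key, mul_comm]⟩
  exact ⟨mul_right_cancel₀ hQ.ne_zero (hden ▸ key), hden⟩

/-- `κ + 1 / (z - c)`. -/
lemma exists_simple_pole_some_evalAt (c κ : ℂ) :
    ∃ g : RatFunc ℂ, ordAt g (some c) = -1 ∧ (∀ r ≠ some c, 0 ≤ ordAt g r) ∧
      evalAt g none = κ ∧ ∀ a ≠ c, evalAt g (some a) = κ + (a - c)⁻¹ := by
  set P : ℂ[X] := C κ * (X - C c) + 1
  have hPc : P.eval c = 1 := by simp [P]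
  have hPdeg : P.natDegree ≤ 1 := by
    refine (natDegree_add_le _ _).trans (max_le ((natDegree_C_mul_le _ _).trans ?_) (by simp))
    simp
  have hcop : IsCoprime P (X - C c) := by
    refine ((irreducible_X_sub_C c).coprime_iff_not_dvd.mpr ?_).symm
    rw [dvd_iff_isRoot, IsRoot, hPc]
    exact one_ne_zero
  obtain ⟨g, hnum, hden⟩ : ∃ g : RatFunc ℂ, g.num = P ∧ g.denom = X - C c :=
    ⟨_, RatFunc.num_denom_div_of_isCoprime (monic_X_sub_C c) hcop⟩
  have hPrm : P.rootMultiplicity c = 0 := rootMultiplicity_eq_zero (by simp [IsRoot, hPc])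
  refine ⟨g, ?_, ?_, ?_, fun a hac => ?_⟩
  · simp [ordAt, hnum, hden, hPrm, rootMultiplicity_X_sub_C]
  · rintro (_ | b) hb
    · simp only [ordAt, hnum, hden, natDegree_X_sub_C]
      omega
    · have hbc : b ≠ c := fun h => hb (h ▸ rfl)
      simp [ordAt, hnum, hden, rootMultiplicity_eq_zero, sub_eq_zero, hbc]
  · rcases eq_or_ne κ 0 with rfl | hκ
    · simp [evalAt, hnum, hden, P]
    · have hP : P = C κ * X + C (1 - κ * c) := by simp only [P, C_sub, C_mul, C_1]; ring
      simp only [evalAt, hnum, hden, hP, natDegree_linear hκ, leadingCoeff_linear hκ,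
        natDegree_X_sub_C, leadingCoeff_X_sub_C]
      simp
  · have hac' : a - c ≠ 0 := sub_ne_zero.mpr hac
    simp only [evalAt, RatFunc.eval, hnum, hden, eval₂_id, P, eval_add, eval_mul, eval_C,
      eval_sub, eval_X, eval_one]
    field_simp

lemma exists_simple_pole_some (c : ℂ) {p : Option ℂ} (hp : p ≠ some c) (μ : ℂ) :
    ∃ g : RatFunc ℂ, ordAt g (some c) = -1 ∧ (∀ r ≠ some c, 0 ≤ ordAt g r) ∧ evalAt g p = μ := by
  rcases p with _ | a
  · obtain ⟨g, hpole, hreg, hval, -⟩ := exists_simple_pole_some_evalAt c μ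
    exact ⟨g, hpole, hreg, hval⟩
  · have hac : a ≠ c := fun h => hp (h ▸ rfl)
    obtain ⟨g, hpole, hreg, -, hval⟩ := exists_simple_pole_some_evalAt c (μ - (a - c)⁻¹)
    exact ⟨g, hpole, hreg, by rw [hval a hac]; ring⟩

/-- `z + κ`. -/
lemma exists_simple_pole_none {p : Option ℂ} (hp : p ≠ none) (μ : ℂ) :
    ∃ g : RatFunc ℂ, ordAt g none = -1 ∧ (∀ r ≠ none, 0 ≤ ordAt g r) ∧ evalAt g p = μ := by
  obtain ⟨a, rfl⟩ := Option.ne_none_iff_exists'.mp hp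
  set g := algebraMap ℂ[X] (RatFunc ℂ) (X + C (μ - a))
  have hnum : g.num = X + C (μ - a) := RatFunc.num_algebraMap _
  have hden : g.denom = 1 := RatFunc.denom_algebraMap _
  refine ⟨g, ?_, ?_, ?_⟩
  · simp only [ordAt, hnum, hden, natDegree_X_add_C, natDegree_one]
    norm_num
  · rintro (_ | b) hb
    · exact absurd rfl hb
    · simp [ordAt, hnum, hden, rootMultiplicity_eq_zero]
  · simp [evalAt, RatFunc.eval, hnum, hden]

lemma exists_simple_pole {p q : Option ℂ} (hpq : p ≠ q) (μ : ℂ) :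
    ∃ g : RatFunc ℂ, ordAt g q = -1 ∧ (∀ r ≠ q, 0 ≤ ordAt g r) ∧ evalAt g p = μ := by
  cases q with
  | none => exact exists_simple_pole_none hpq μ
  | some c => exact exists_simple_pole_some c hpq μ

end ProjectiveLine

section Tree

variable {V E : Type*} (src tgt : E → V)

def EdgeAdj (Es : Finset E) (a b : V) : Prop :=
  ∃ e ∈ Es, (src e = a ∧ tgt e = b) ∨ (src e = b ∧ tgt e = a)

structure IsTreeOn (P : Finset V) (Es : Finset E) : Prop where
  mem_of_mem : ∀ e ∈ Es, src e ∈ P ∧ tgt e ∈ P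
  connected : ∀ a ∈ P, ∀ b ∈ P, Relation.ReflTransGen (EdgeAdj src tgt Es) a b
  card_add_one : Es.card + 1 = P.card

variable {src tgt} {P : Finset V} {Es : Finset E}

/-- Every vertex of a tree with at least two vertices meets an edge, and the edges meet the
vertices `2 * (#P - 1) < 2 * #P` times in total, so some vertex meets exactly one edge. -/
lemma IsTreeOn.exists_leaf (hT : IsTreeOn src tgt P Es) (h2 : 2 ≤ P.card) :
    ∃ ℓ ∈ P, ∃ e₀ ∈ Es, ((src e₀ = ℓ ∧ tgt e₀ ≠ ℓ) ∨ (tgt e₀ = ℓ ∧ src e₀ ≠ ℓ)) ∧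
      ∀ e ∈ Es, (src e = ℓ ∨ tgt e = ℓ) → e = e₀ := by
  set out : V → Finset E := fun v => Es.filter (src · = v)
  set inc : V → Finset E := fun v => Es.filter (tgt · = v)
  have hsum : ∑ v ∈ P, ((out v).card + (inc v).card) < ∑ _v ∈ P, 2 := by
    rw [Finset.sum_add_distrib,
      ← Finset.card_eq_sum_card_fiberwise (fun e he => (hT.mem_of_mem e he).1),
      ← Finset.card_eq_sum_card_fiberwise (fun e he => (hT.mem_of_mem e he).2),
      Finset.sum_const, smul_eq_mul]
    have := hT.card_add_one
    omega
  obtain ⟨ℓ, hℓ, hlt⟩ := Finset.exists_lt_of_sum_lt hsum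
  obtain ⟨w, hw, hwℓ⟩ := Finset.exists_mem_ne h2 ℓ
  obtain ⟨e₀, he₀, hends⟩ : ∃ e₀ ∈ Es, src e₀ = ℓ ∨ tgt e₀ = ℓ := by
    rcases (hT.connected ℓ hℓ w hw).cases_head with hℓw | ⟨c, ⟨e, he, hor⟩, -⟩
    · exact absurd hℓw.symm hwℓ
    · exact ⟨e, he, by tauto⟩
  have hle : (out ℓ).card + (inc ℓ).card ≤ 1 := by omega
  have hout : ∀ e ∈ Es, src e = ℓ → e ∈ out ℓ := fun e he hs => Finset.mem_filter.mpr ⟨he, hs⟩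
  have hinc : ∀ e ∈ Es, tgt e = ℓ → e ∈ inc ℓ := fun e he ht => Finset.mem_filter.mpr ⟨he, ht⟩
  have hmixed : ∀ e ∈ Es, ∀ e' ∈ Es, src e = ℓ → tgt e' = ℓ → False := fun e he e' he' hs ht => by
    have := Finset.card_pos.mpr ⟨e, hout e he hs⟩
    have := Finset.card_pos.mpr ⟨e', hinc e' he' ht⟩
    omega
  have hsrc : ∀ e ∈ Es, src e = ℓ → e = e₀ ∨ tgt e₀ = ℓ := fun e he hs =>
    hends.imp (fun hs₀ => Finset.card_le_one.mp (by omega) e (hout e he hs) e₀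
      (hout e₀ he₀ hs₀)) id
  have htgt : ∀ e ∈ Es, tgt e = ℓ → e = e₀ ∨ src e₀ = ℓ := fun e he ht =>
    hends.symm.imp (fun ht₀ => Finset.card_le_one.mp (by omega) e (hinc e he ht) e₀
      (hinc e₀ he₀ ht₀)) id
  refine ⟨ℓ, hℓ, e₀, he₀, ?_, ?_⟩
  · exact hends.imp (fun hs => ⟨hs, fun ht => hmixed e₀ he₀ e₀ he₀ hs ht⟩)
      (fun ht => ⟨ht, fun hs => hmixed e₀ he₀ e₀ he₀ hs ht⟩)
  · rintro e he (hs | ht)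
    · exact (hsrc e he hs).resolve_right (hmixed e he e₀ he₀ hs)
    · exact (htgt e he ht).resolve_right (fun hs => hmixed e₀ he₀ e he hs ht)

/-- The connectivity of the smaller tree comes from contracting the leaf `ℓ` onto its neighbour,
which turns every path of the tree into a path avoiding `e₀`. -/
lemma IsTreeOn.erase_leaf (hT : IsTreeOn src tgt P Es) {ℓ : V} {e₀ : E} (hℓ : ℓ ∈ P)
    (he₀ : e₀ ∈ Es) (hleaf : (src e₀ = ℓ ∧ tgt e₀ ≠ ℓ) ∨ (tgt e₀ = ℓ ∧ src e₀ ≠ ℓ))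
    (hunique : ∀ e ∈ Es, (src e = ℓ ∨ tgt e = ℓ) → e = e₀) :
    IsTreeOn src tgt (P.erase ℓ) (Es.erase e₀) := by
  have hends : ∀ e ∈ Es.erase e₀, src e ≠ ℓ ∧ tgt e ≠ ℓ := fun e he =>
    ⟨fun hs => Finset.ne_of_mem_erase he (hunique e (Finset.mem_of_mem_erase he) (.inl hs)),
      fun ht => Finset.ne_of_mem_erase he (hunique e (Finset.mem_of_mem_erase he) (.inr ht))⟩
  refine ⟨fun e he => ?_, fun a ha b hb => ?_, ?_⟩
  · have hmem := hT.mem_of_mem e (Finset.mem_of_mem_erase he)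
    exact ⟨Finset.mem_erase.mpr ⟨(hends e he).1, hmem.1⟩,
      Finset.mem_erase.mpr ⟨(hends e he).2, hmem.2⟩⟩
  · let contract : V → V := fun x => if x = ℓ then (if src e₀ = ℓ then tgt e₀ else src e₀) else x
    have hcontract : ∀ x ∈ P.erase ℓ, contract x = x :=
      fun x hx => if_neg (Finset.ne_of_mem_erase hx)
    rw [← hcontract a ha, ← hcontract b hb]
    refine Relation.ReflTransGen.lift' contract (fun x y ⟨e, he, hxy⟩ => ?_) _ _
      (hT.connected a (Finset.mem_of_mem_erase ha) b (Finset.mem_of_mem_erase hb))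
    by_cases he₀e : e = e₀
    · subst he₀e
      have : contract (src e) = contract (tgt e) := by
        rcases hleaf with ⟨hs, ht⟩ | ⟨ht, hs⟩ <;> simp [contract, hs, ht]
      rcases hxy with ⟨rfl, rfl⟩ | ⟨rfl, rfl⟩ <;> simp only [Function.onFun, this] <;> rfl
    · have he' : e ∈ Es.erase e₀ := Finset.mem_erase.mpr ⟨he₀e, he⟩
      obtain ⟨hs, ht⟩ := hends e he'
      refine .single ⟨e, he', ?_⟩
      rcases hxy with ⟨rfl, rfl⟩ | ⟨rfl, rfl⟩ <;> simp [contract, hs, ht]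
  · have := hT.card_add_one
    have := Finset.card_pos.mpr ⟨e₀, he₀⟩
    rw [Finset.card_erase_of_mem he₀, Finset.card_erase_of_mem hℓ]
    omega

/-- Induction on leaves: solve on the tree minus a leaf, then at the leaf match the value across
its unique edge. -/
theorem IsTreeOn.exists_compatible {X Y : Type*} {A : V → Set X} {evS evT : E → X → Y}
    (hT : IsTreeOn src tgt P Es) (hne : ∀ v ∈ P, (A v).Nonempty)
    (hsurjS : ∀ e ∈ Es, ∀ y, ∃ x ∈ A (src e), evS e x = y)
    (hsurjT : ∀ e ∈ Es, ∀ y, ∃ x ∈ A (tgt e), evT e x = y) :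
    ∃ f : V → X, (∀ v ∈ P, f v ∈ A v) ∧ ∀ e ∈ Es, evS e (f (src e)) = evT e (f (tgt e)) := by
  induction hk : Es.card generalizing P Es with
  | zero =>
    obtain ⟨v, rfl⟩ := Finset.card_eq_one.mp (by rw [← hT.card_add_one, hk])
    obtain ⟨x, hx⟩ := hne v (Finset.mem_singleton_self v)
    refine ⟨fun _ => x, fun w hw => Finset.mem_singleton.mp hw ▸ hx, fun e he => ?_⟩
    exact absurd (Finset.card_eq_zero.mp hk ▸ he) (Finset.notMem_empty e)
  | succ k ih =>
    obtain ⟨ℓ, hℓ, e₀, he₀, hleaf, hunique⟩ := hT.exists_leaf (by rw [← hT.card_add_one]; omega)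
    have hT' := hT.erase_leaf hℓ he₀ hleaf hunique
    obtain ⟨f, hfA, hf⟩ := ih hT' (fun v hv => hne v (Finset.mem_of_mem_erase hv))
      (fun e he => hsurjS e (Finset.mem_of_mem_erase he))
      (fun e he => hsurjT e (Finset.mem_of_mem_erase he))
      (by rw [Finset.card_erase_of_mem he₀, hk]; rfl)
    obtain ⟨x, hxA, hx⟩ : ∃ x ∈ A ℓ,
        evS e₀ (Function.update f ℓ x (src e₀)) = evT e₀ (Function.update f ℓ x (tgt e₀)) := by
      rcases hleaf with ⟨hs, ht⟩ | ⟨ht, hs⟩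
      · obtain ⟨x, hxA, hx⟩ := hsurjS e₀ he₀ (evT e₀ (f (tgt e₀)))
        exact ⟨x, hs ▸ hxA, by rw [hs, Function.update_self, Function.update_of_ne ht, hx]⟩
      · obtain ⟨x, hxA, hx⟩ := hsurjT e₀ he₀ (evS e₀ (f (src e₀)))
        exact ⟨x, ht ▸ hxA, by rw [ht, Function.update_self, Function.update_of_ne hs, hx]⟩
    refine ⟨Function.update f ℓ x, fun v hv => ?_, fun e he => ?_⟩
    · by_cases hvℓ : v = ℓ
      · rwa [hvℓ, Function.update_self]
      · rw [Function.update_of_ne hvℓ]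
        exact hfA v (Finset.mem_erase.mpr ⟨hvℓ, hv⟩)
    · by_cases he₀e : e = e₀
      · rwa [he₀e]
      · have he' : e ∈ Es.erase e₀ := Finset.mem_erase.mpr ⟨he₀e, he⟩
        obtain ⟨hs, ht⟩ := hT'.mem_of_mem e he'
        rw [Function.update_of_ne (Finset.ne_of_mem_erase hs),
          Function.update_of_ne (Finset.ne_of_mem_erase ht)]
        exact hf e he'

end Tree

namespace TropGraph

variable {n : ℕ} {G : TropGraph n} {φ : PL G} {E' : Finset G.BE} {U' : Finset G.UE}
  {EΓ : Finset G.BE} {pS pT : G.BE → Option ℂ} {pU : G.UE → Option ℂ} {h : ℝ} {v : G.V}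

lemma Dcoef_nonneg (q : Option ℂ) : 0 ≤ Dcoef G φ E' U' EΓ pS pT pU h v q := by
  unfold Dcoef
  split_ifs
  · refine add_nonneg (add_nonneg ?_ ?_) ?_ <;> refine Finset.sum_nonneg fun x hx => ?_ <;>
      simp only [Finset.mem_filter] at hx
    · linarith [hx.2.2.2.1]
    · linarith [hx.2.2.2.1]
    · linarith [(Int.cast_lt_zero (R := ℝ)).mpr hx.2.2.1]
  · exact le_rfl

lemma Dcoef_le_DdegAt (q : Option ℂ) :
    Dcoef G φ E' U' EΓ pS pT pU h v q ≤ DdegAt G φ E' U' EΓ h v := by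
  unfold Dcoef DdegAt
  split_ifs
  · refine add_le_add (add_le_add ?_ ?_) ?_ <;>
      refine Finset.sum_le_sum_of_subset_of_nonneg
        (Finset.monotone_filter_right _ fun x hx => by tauto) fun x hx _ => ?_ <;>
      simp only [Finset.mem_filter] at hx
    · linarith [hx.2.2.2]
    · linarith [hx.2.2.2]
    · linarith [(Int.cast_lt_zero (R := ℝ)).mpr hx.2.2]
  · exact le_rfl

lemma sub_le_Dcoef_of_src {e : G.BE} (he : e ∈ E') (heΓ : e ∉ EΓ) (hsrc : G.src e = v)
    (hv : φ.val v = h) (hneg : φ.val (G.tgt e) - φ.val (G.src e) < 0) :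
    φ.val (G.src e) - φ.val (G.tgt e) ≤ Dcoef G φ E' U' EΓ pS pT pU h v (pS e) := by
  rw [Dcoef, if_pos hv]
  refine le_add_of_le_of_nonneg (le_add_of_le_of_nonneg ?_ ?_) ?_
  · refine Finset.single_le_sum (f := fun x => φ.val (G.src x) - φ.val (G.tgt x))
      (fun x hx => ?_) (Finset.mem_filter.mpr ⟨he, heΓ, hsrc, hneg, rfl⟩)
    linarith [(Finset.mem_filter.mp hx).2.2.2.1]
  · exact Finset.sum_nonneg fun x hx => by linarith [(Finset.mem_filter.mp hx).2.2.2.1]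
  · exact Finset.sum_nonneg fun x hx =>
      by linarith [(Int.cast_lt_zero (R := ℝ)).mpr (Finset.mem_filter.mp hx).2.2.1]

lemma sub_le_Dcoef_of_tgt {e : G.BE} (he : e ∈ E') (heΓ : e ∉ EΓ) (htgt : G.tgt e = v)
    (hv : φ.val v = h) (hneg : φ.val (G.src e) - φ.val (G.tgt e) < 0) :
    φ.val (G.tgt e) - φ.val (G.src e) ≤ Dcoef G φ E' U' EΓ pS pT pU h v (pT e) := by
  rw [Dcoef, if_pos hv]
  refine le_add_of_le_of_nonneg (le_add_of_nonneg_of_le ?_ ?_) ?_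
  · exact Finset.sum_nonneg fun x hx => by linarith [(Finset.mem_filter.mp hx).2.2.2.1]
  · refine Finset.single_le_sum (f := fun x => φ.val (G.tgt x) - φ.val (G.src x))
      (fun x hx => ?_) (Finset.mem_filter.mpr ⟨he, heΓ, htgt, hneg, rfl⟩)
    linarith [(Finset.mem_filter.mp hx).2.2.2.1]
  · exact Finset.sum_nonneg fun x hx =>
      by linarith [(Int.cast_lt_zero (R := ℝ)).mpr (Finset.mem_filter.mp hx).2.2.1]

lemma neg_uslope_le_Dcoef {u : G.UE} (hu : u ∈ U') (hatt : G.att u = v) (hv : φ.val v = h)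
    (hneg : φ.uslope u < 0) :
    (-(φ.uslope u) : ℝ) ≤ Dcoef G φ E' U' EΓ pS pT pU h v (pU u) := by
  rw [Dcoef, if_pos hv]
  refine le_add_of_nonneg_of_le (add_nonneg ?_ ?_) ?_
  · exact Finset.sum_nonneg fun x hx => by linarith [(Finset.mem_filter.mp hx).2.2.2.1]
  · exact Finset.sum_nonneg fun x hx => by linarith [(Finset.mem_filter.mp hx).2.2.2.1]
  · refine Finset.single_le_sum (f := fun x => (-(φ.uslope x) : ℝ))
      (fun x hx => ?_) (Finset.mem_filter.mpr ⟨hu, hatt, hneg, rfl⟩)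
    linarith [(Int.cast_lt_zero (R := ℝ)).mpr (Finset.mem_filter.mp hx).2.2.1]

lemma PL.one_le_abs_slope (φ : PL G) (e : G.BE) (hne : φ.val (G.src e) ≠ φ.val (G.tgt e)) :
    1 ≤ |φ.val (G.tgt e) - φ.val (G.src e)| := by
  obtain ⟨k, hk⟩ := φ.int_slope e
  have hk0 : k ≠ 0 := by
    rintro rfl
    exact hne (by linarith [hk, Int.cast_zero (R := ℝ)])
  rw [hk, ← Int.cast_abs]
  exact_mod_cast Int.one_le_abs hk0

/-- The coefficients of `D_φ` are integers, so a positive contribution to `deg(D_φ|_{ℙ¹_v})`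
is a point of multiplicity at least one. -/
lemma exists_one_le_Dcoef (hv : φ.val v = h) (hdeg : 1 ≤ DdegAt G φ E' U' EΓ h v) :
    ∃ q, 1 ≤ Dcoef G φ E' U' EΓ pS pT pU h v q := by
  by_contra! hlt
  rw [DdegAt, if_pos hv] at hdeg
  refine absurd hdeg (not_le.mpr (lt_of_le_of_lt (add_nonpos (add_nonpos ?_ ?_) ?_) one_pos)) <;>
    refine Finset.sum_nonpos fun x hx => ?_
  · obtain ⟨hxE, hxΓ, hxv, hneg⟩ := Finset.mem_filter.mp hx
    have := φ.one_le_abs_slope x (by linarith)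
    rw [abs_of_neg hneg, neg_sub] at this
    exact ((this.trans (sub_le_Dcoef_of_src hxE hxΓ hxv hv hneg)).not_gt (hlt _)).elim
  · obtain ⟨hxE, hxΓ, hxv, hneg⟩ := Finset.mem_filter.mp hx
    have := φ.one_le_abs_slope x (by linarith)
    rw [abs_of_pos (by linarith)] at this
    exact ((this.trans (sub_le_Dcoef_of_tgt hxE hxΓ hxv hv hneg)).not_gt (hlt _)).elim
  · obtain ⟨hxU, hxv, hneg⟩ := Finset.mem_filter.mp hx
    have : (1 : ℝ) ≤ -(φ.uslope x : ℝ) := by exact_mod_cast (by omega : 1 ≤ -φ.uslope x)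
    exact ((this.trans (neg_uslope_le_Dcoef hxU hxv hv hneg)).not_gt (hlt _)).elim

lemma Dcoef_eq_zero_of_forall_ne {q : Option ℂ} (hS : ∀ e ∈ E', e ∉ EΓ → G.src e = v → pS e ≠ q)
    (hT : ∀ e ∈ E', e ∉ EΓ → G.tgt e = v → pT e ≠ q) (hU : ∀ u ∈ U', G.att u = v → pU u ≠ q) :
    Dcoef G φ E' U' EΓ pS pT pU h v q = 0 := by
  unfold Dcoef
  split_ifs
  · rw [Finset.filter_false_of_mem fun e he ⟨hΓ, hv, _, hq⟩ => hS e he hΓ hv hq,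
      Finset.filter_false_of_mem fun e he ⟨hΓ, hv, _, hq⟩ => hT e he hΓ hv hq,
      Finset.filter_false_of_mem fun u hu ⟨hv, _, hq⟩ => hU u hu hv hq]
    simp
  · rfl

variable (G E' U' pS pT pU) in
def PointsDistinctAt (v : G.V) : Prop :=
  (∀ e₁ ∈ E', ∀ e₂ ∈ E', G.src e₁ = v → G.src e₂ = v → pS e₁ = pS e₂ → e₁ = e₂) ∧
  (∀ e₁ ∈ E', ∀ e₂ ∈ E', G.tgt e₁ = v → G.tgt e₂ = v → pT e₁ = pT e₂ → e₁ = e₂) ∧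
  (∀ u₁ ∈ U', ∀ u₂ ∈ U', G.att u₁ = v → G.att u₂ = v → pU u₁ = pU u₂ → u₁ = u₂) ∧
  (∀ e₁ ∈ E', ∀ e₂ ∈ E', G.src e₁ = v → G.tgt e₂ = v → pS e₁ ≠ pT e₂) ∧
  (∀ e₁ ∈ E', ∀ u ∈ U', G.src e₁ = v → G.att u = v → pS e₁ ≠ pU u) ∧
  (∀ e₁ ∈ E', ∀ u ∈ U', G.tgt e₁ = v → G.att u = v → pT e₁ ≠ pU u)

lemma Dcoef_pS_eq_zero (hv : PointsDistinctAt G E' U' pS pT pU v) (hEΓ : EΓ ⊆ E') {e₀ : G.BE}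
    (he₀ : e₀ ∈ EΓ) (hsrc : G.src e₀ = v) : Dcoef G φ E' U' EΓ pS pT pU h v (pS e₀) = 0 := by
  obtain ⟨hSS, -, -, hST, hSU, -⟩ := hv
  refine Dcoef_eq_zero_of_forall_ne (fun e he heΓ hev hq => ?_)
    (fun e he _ hev hq => hST e₀ (hEΓ he₀) e he hsrc hev hq.symm)
    (fun u hu huv hq => hSU e₀ (hEΓ he₀) u hu hsrc huv hq.symm)
  exact heΓ (hSS e he e₀ (hEΓ he₀) hev hsrc hq ▸ he₀)

lemma Dcoef_pT_eq_zero (hv : PointsDistinctAt G E' U' pS pT pU v) (hEΓ : EΓ ⊆ E') {e₀ : G.BE}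
    (he₀ : e₀ ∈ EΓ) (htgt : G.tgt e₀ = v) : Dcoef G φ E' U' EΓ pS pT pU h v (pT e₀) = 0 := by
  obtain ⟨-, hTT, -, hST, -, hTU⟩ := hv
  refine Dcoef_eq_zero_of_forall_ne (fun e he _ hev hq => hST e he e₀ (hEΓ he₀) hev htgt hq)
    (fun e he heΓ hev hq => ?_) (fun u hu huv hq => hTU e₀ (hEΓ he₀) u hu htgt huv hq.symm)
  exact heΓ (hTT e he e₀ (hEΓ he₀) hev htgt hq ▸ he₀)

variable (G φ E' U' EΓ pS pT pU h) in
def admissibleFns (v : G.V) : Set (RatFunc ℂ) :=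
  {g | (∀ q, 0 ≤ Dcoef G φ E' U' EΓ pS pT pU h v q + (ordAt g q : ℝ)) ∧
    ((¬∃ c : ℂ, g = RatFunc.C c) ↔ φ.val v = h)}

/-- For `φ(v) ≠ h` a constant does it; for `φ(v) = h` a function with a simple pole at a point
of `D_φ|_{ℙ¹_v}` of multiplicity at least one. -/
lemma exists_mem_admissibleFns_evalAt_eq {p : Option ℂ}
    (hp : φ.val v = h → ∃ q ≠ p, 1 ≤ Dcoef G φ E' U' EΓ pS pT pU h v q) (μ : ℂ) :
    ∃ g ∈ admissibleFns G φ E' U' EΓ pS pT pU h v, evalAt g p = μ := by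
  by_cases hv : φ.val v = h
  · obtain ⟨q, hqp, hq⟩ := hp hv
    obtain ⟨g, hpole, hreg, hval⟩ := exists_simple_pole hqp.symm μ
    refine ⟨g, ⟨fun r => ?_, iff_of_true ?_ hv⟩, hval⟩
    · by_cases hr : r = q
      · rw [hr, hpole]
        push_cast
        linarith
      · exact add_nonneg (Dcoef_nonneg r) (by exact_mod_cast hreg r hr)
    · exact not_exists_C_eq_of_ordAt_ne_zero (by rw [hpole]; decide)
  · refine ⟨RatFunc.C μ, ⟨fun r => ?_, iff_of_false (not_not.mpr ⟨μ, rfl⟩) hv⟩, evalAt_C μ p⟩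
    simpa [ordAt_C] using Dcoef_nonneg r

lemma exists_mem_admissibleFns_evalAt_eq_of_Dcoef_eq_zero
    (hpole : φ.val v = h → ∃ q, 1 ≤ Dcoef G φ E' U' EΓ pS pT pU h v q) {p : Option ℂ}
    (hp : Dcoef G φ E' U' EΓ pS pT pU h v p = 0) (μ : ℂ) :
    ∃ g ∈ admissibleFns G φ E' U' EΓ pS pT pU h v, evalAt g p = μ := by
  refine exists_mem_admissibleFns_evalAt_eq (fun hv => ?_) μ
  obtain ⟨q, hq⟩ := hpole hv
  exact ⟨q, fun hqp => by rw [hqp, hp] at hq; norm_num at hq, hq⟩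

lemma admissibleFns_nonempty (hpole : φ.val v = h → ∃ q, 1 ≤ Dcoef G φ E' U' EΓ pS pT pU h v q) :
    (admissibleFns G φ E' U' EΓ pS pT pU h v).Nonempty := by
  obtain ⟨p, hp⟩ : ∃ p, φ.val v = h → ∃ q ≠ p, 1 ≤ Dcoef G φ E' U' EΓ pS pT pU h v q := by
    by_cases hv : φ.val v = h
    · obtain ⟨q, hq⟩ := hpole hv
      obtain ⟨p, hpq⟩ := exists_ne q
      exact ⟨p, fun _ => ⟨q, hpq.symm, hq⟩⟩
    · exact ⟨none, fun hv' => (hv hv').elim⟩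
  obtain ⟨g, hg, -⟩ := exists_mem_admissibleFns_evalAt_eq hp 0
  exact ⟨g, hg⟩

theorem one_le_DdegAt_of_c0Ample {PΓ : Finset G.V} (hC : C0Ample G φ PΓ E' U' EΓ pS pT pU h) :
    ∀ v ∈ PΓ, φ.val v = h → 1 ≤ DdegAt G φ E' U' EΓ h v := by
  intro v hv hvh
  obtain ⟨f, hdiv, -, hnc⟩ := hC
  obtain ⟨q, hq⟩ := exists_ordAt_neg_of_not_exists_C_eq ((hnc v hv).mpr hvh)
  have : (ordAt (f v) q : ℝ) ≤ -1 := by exact_mod_cast (by omega : ordAt (f v) q ≤ -1)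
  refine le_trans ?_ (Dcoef_le_DdegAt (pS := pS) (pT := pT) (pU := pU) q)
  linarith [hdiv v hv q]

theorem c0Ample_of_isTreeOn {PΓ : Finset G.V} (hT : IsTreeOn G.src G.tgt PΓ EΓ) (hEΓ : EΓ ⊆ E')
    (hdist : ∀ v ∈ PΓ, PointsDistinctAt G E' U' pS pT pU v)
    (hdeg : ∀ v ∈ PΓ, φ.val v = h → 1 ≤ DdegAt G φ E' U' EΓ h v) :
    C0Ample G φ PΓ E' U' EΓ pS pT pU h := by
  have hpole : ∀ v ∈ PΓ, φ.val v = h → ∃ q, 1 ≤ Dcoef G φ E' U' EΓ pS pT pU h v q :=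
    fun v hv hvh => exists_one_le_Dcoef hvh (hdeg v hv hvh)
  obtain ⟨f, hfA, hf⟩ := hT.exists_compatible (evS := fun e g => evalAt g (pS e))
    (evT := fun e g => evalAt g (pT e)) (fun v hv => admissibleFns_nonempty (hpole v hv))
    (fun e he => exists_mem_admissibleFns_evalAt_eq_of_Dcoef_eq_zero
      (hpole _ (hT.mem_of_mem e he).1)
      (Dcoef_pS_eq_zero (hdist _ (hT.mem_of_mem e he).1) hEΓ he rfl))
    (fun e he => exists_mem_admissibleFns_evalAt_eq_of_Dcoef_eq_zero
      (hpole _ (hT.mem_of_mem e he).2)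
      (Dcoef_pT_eq_zero (hdist _ (hT.mem_of_mem e he).2) hEΓ he rfl))
  exact ⟨f, fun v hv => (hfA v hv).1, hf, fun v hv => (hfA v hv).2⟩

end TropGraph

open TropGraph in
theorem c0ample_iff_tree_general
    {n : ℕ} (G : TropGraph n) (φ : TropGraph.PL G)
    (E' : Finset G.BE) (U' : Finset G.UE)
    (PΓ : Finset G.V) (EΓ : Finset G.BE) (hΓne : PΓ.Nonempty)
    (pS pT : G.BE → Option ℂ) (pU : G.UE → Option ℂ)
    -- Γ = (PΓ, EΓ) is a bounded connected subgraph of Γ'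
    (hEΓsub : EΓ ⊆ E')
    (hEΓ : ∀ e ∈ EΓ, G.src e ∈ PΓ ∧ G.tgt e ∈ PΓ)
    (hΓconn : ∀ a ∈ PΓ, ∀ b ∈ PΓ, Relation.ReflTransGen
      (fun a b => ∃ e ∈ EΓ, (G.src e = a ∧ G.tgt e = b) ∨ (G.src e = b ∧ G.tgt e = a)) a b)
    -- for each vertex v of Γ, the chosen node and boundary points on the
    -- component ℙ¹_v are pairwise distinct
    (hdist : ∀ v ∈ PΓ,
      (∀ e₁ ∈ E', ∀ e₂ ∈ E', G.src e₁ = v → G.src e₂ = v → pS e₁ = pS e₂ → e₁ = e₂) ∧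
      (∀ e₁ ∈ E', ∀ e₂ ∈ E', G.tgt e₁ = v → G.tgt e₂ = v → pT e₁ = pT e₂ → e₁ = e₂) ∧
      (∀ u₁ ∈ U', ∀ u₂ ∈ U', G.att u₁ = v → G.att u₂ = v → pU u₁ = pU u₂ → u₁ = u₂) ∧
      (∀ e₁ ∈ E', ∀ e₂ ∈ E', G.src e₁ = v → G.tgt e₂ = v → pS e₁ ≠ pT e₂) ∧
      (∀ e₁ ∈ E', ∀ u ∈ U', G.src e₁ = v → G.att u = v → pS e₁ ≠ pU u) ∧
      (∀ e₁ ∈ E', ∀ u ∈ U', G.tgt e₁ = v → G.att u = v → pT e₁ ≠ pU u))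
    -- Γ is a tree: connected (above) and acyclic
    (hacyc : EΓ.card + 1 = PΓ.card) :
    C0Ample G φ PΓ E' U' EΓ pS pT pU (PΓ.inf' hΓne φ.val) ↔
      ∀ v ∈ PΓ, φ.val v = PΓ.inf' hΓne φ.val →
        1 ≤ DdegAt G φ E' U' EΓ (PΓ.inf' hΓne φ.val) v :=
  ⟨one_le_DdegAt_of_c0Ample, c0Ample_of_isTreeOn ⟨hEΓ, hΓconn, hacyc⟩ hEΓsub hdist⟩

open TropGraph in
/-- Tree case: suppose `Γ` is a tree, so that the nodal curve `(C_Γ)₀`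
has arithmetic genus 0.  Then `φ` is `C₀`-ample on `Γ` in `Γ'` if and only if
`deg(D_φ|_{ℙ¹_v}) ≥ 1` for every vertex `v` of `Γ` with `φ(v) = h`,
where `h = min_{v ∈ V(Γ)} φ(v)`. -/
theorem c0ample_iff_tree
    {n : ℕ} (G : TropGraph n) (φ : TropGraph.PL G)
    (P' : Finset G.V) (E' : Finset G.BE) (U' : Finset G.UE)
    (PΓ : Finset G.V) (EΓ : Finset G.BE) (hΓne : PΓ.Nonempty)
    (pS pT : G.BE → Option ℂ) (pU : G.UE → Option ℂ)
    -- Γ' = (P', E', U') is a subgraph of Σ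
    (hE' : ∀ e ∈ E', G.src e ∈ P' ∧ G.tgt e ∈ P')
    (hU' : ∀ u ∈ U', G.att u ∈ P')
    -- Γ = (PΓ, EΓ) is a bounded connected subgraph of Γ'
    (hPΓ : ∀ w ∈ PΓ, w ∈ P') (hEΓsub : EΓ ⊆ E')
    (hEΓ : ∀ e ∈ EΓ, G.src e ∈ PΓ ∧ G.tgt e ∈ PΓ)
    (hΓconn : ∀ a ∈ PΓ, ∀ b ∈ PΓ, Relation.ReflTransGen
      (fun a b => ∃ e ∈ EΓ, (G.src e = a ∧ G.tgt e = b) ∨ (G.src e = b ∧ G.tgt e = a)) a b)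
    -- Γ is contained in the interior of Γ': no vertex of Γ is incident to an
    -- edge of Σ not in Γ'
    (hinter : ∀ w ∈ PΓ, (∀ e : G.BE, (G.src e = w ∨ G.tgt e = w) → e ∈ E') ∧
      ∀ u : G.UE, G.att u = w → u ∈ U')
    -- for each vertex v of Γ, the chosen node and boundary points on the
    -- component ℙ¹_v are pairwise distinct
    (hdist : ∀ v ∈ PΓ,
      (∀ e₁ ∈ E', ∀ e₂ ∈ E', G.src e₁ = v → G.src e₂ = v → pS e₁ = pS e₂ → e₁ = e₂) ∧
      (∀ e₁ ∈ E', ∀ e₂ ∈ E', G.tgt e₁ = v → G.tgt e₂ = v → pT e₁ = pT e₂ → e₁ = e₂) ∧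
      (∀ u₁ ∈ U', ∀ u₂ ∈ U', G.att u₁ = v → G.att u₂ = v → pU u₁ = pU u₂ → u₁ = u₂) ∧
      (∀ e₁ ∈ E', ∀ e₂ ∈ E', G.src e₁ = v → G.tgt e₂ = v → pS e₁ ≠ pT e₂) ∧
      (∀ e₁ ∈ E', ∀ u ∈ U', G.src e₁ = v → G.att u = v → pS e₁ ≠ pU u) ∧
      (∀ e₁ ∈ E', ∀ u ∈ U', G.tgt e₁ = v → G.att u = v → pT e₁ ≠ pU u))
    -- Γ is a tree: connected (above) and acyclic
    (hacyc : EΓ.card + 1 = PΓ.card) :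
    C0Ample G φ PΓ E' U' EΓ pS pT pU (PΓ.inf' hΓne φ.val) ↔
      ∀ v ∈ PΓ, φ.val v = PΓ.inf' hΓne φ.val →
        1 ≤ DdegAt G φ E' U' EΓ (PΓ.inf' hΓne φ.val) v :=
  c0ample_iff_tree_general G φ E' U' PΓ EΓ hΓne pS pT pU hEΓsub hEΓ hΓconn hdist hacyc
end
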